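/- arXiv:0708.1428 — 10 statements merged into one kernel-verified Lean document; each statement's English description precedes it below -/
import Mathlib

section
/- Let a, b, c : V × V → ℂ be sesquilinear mappings, let α ∈ [0,1), and assume there are constants C₁, C₂ ≥ 0 such that |b(u,v)| ≤ C₁‖u‖_V ‖v‖_V^α ‖v‖_H^{1−α} and |c(u,v)| ≤ C₂‖u‖_V^α ‖u‖_H^{1−α} ‖v‖_V for all u, v ∈ V. Then a is H-elliptic for some constants (α₀, ω₀) if and only if a + b + c is H-elliptic for some constants (α₁, ω₁). -/
/-!
Both perturbations are controlled on the diagonal by `‖u‖_V ^ (1 + α) * ‖u‖_H ^ (1 - α)`, and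
by Young's inequality this is at most `ε ‖u‖_V² + M_ε ‖u‖_H²` for every `ε > 0`. A perturbation
that is small in this sense can be absorbed: half of the ellipticity constant pays for it, and
the `H`-term is moved into `ω`. Since `a = (a + b + c) - (b + c)`, the same argument gives both
directions.
-/

section Young

variable {α : ℝ}

theorem exists_rpow_mul_rpow_le (hα₀ : -1 < α) (hα₁ : α < 1) {ε : ℝ} (hε : 0 < ε) :
    ∃ M ≥ 0, ∀ x y : ℝ, 0 ≤ x → 0 ≤ y →
      x ^ (1 + α) * y ^ (1 - α) ≤ ε * x ^ 2 + M * y ^ 2 := by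
  set θ : ℝ := (1 + α) / 2 with hθ_def
  have hθ : 0 < θ := by rw [hθ_def]; linarith
  have h1θ : 0 < 1 - θ := by rw [hθ_def]; linarith
  set K : ℝ := (θ / ε) ^ (θ / (1 - θ)) with hK_def
  have hK : 0 ≤ K := by positivity
  have h2θ : 2 * θ = 1 + α := by rw [hθ_def]; ring
  have h2θ' : 2 * (1 - θ) = 1 - α := by rw [hθ_def]; ring
  refine ⟨(1 - θ) * K, by positivity, fun x y hx hy => ?_⟩
  -- `K` is chosen so that the constants of the weighted AM-GM step below cancel
  have hx2 : (ε / θ * x ^ 2) ^ θ = (ε / θ) ^ θ * x ^ (1 + α) := by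
    rw [Real.mul_rpow (by positivity) (by positivity), ← Real.rpow_natCast x 2,
      ← Real.rpow_mul hx, Nat.cast_ofNat, h2θ]
  have hy2 : (K * y ^ 2) ^ (1 - θ) = (θ / ε) ^ θ * y ^ (1 - α) := by
    rw [Real.mul_rpow hK (by positivity), ← Real.rpow_natCast y 2, ← Real.rpow_mul hy, hK_def,
      ← Real.rpow_mul (by positivity), div_mul_cancel₀ θ h1θ.ne', Nat.cast_ofNat, h2θ']
  have hconst : (ε / θ) ^ θ * (θ / ε) ^ θ = 1 := by
    rw [← Real.mul_rpow (by positivity) (by positivity), div_mul_div_comm, mul_comm ε θ,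
      div_self (by positivity), Real.one_rpow]
  calc x ^ (1 + α) * y ^ (1 - α)
      = (ε / θ * x ^ 2) ^ θ * (K * y ^ 2) ^ (1 - θ) := by
        rw [hx2, hy2, mul_mul_mul_comm, hconst, one_mul]
    _ ≤ θ * (ε / θ * x ^ 2) + (1 - θ) * (K * y ^ 2) :=
        Real.geom_mean_le_arith_mean2_weighted hθ.le h1θ.le (by positivity) (by positivity)
          (by ring)
    _ = ε * x ^ 2 + (1 - θ) * K * y ^ 2 := by field_simp

theorem exists_mul_rpow_mul_rpow_le (hα₀ : -1 < α) (hα₁ : α < 1) {C : ℝ} (hC : 0 ≤ C)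
    {ε : ℝ} (hε : 0 < ε) :
    ∃ M ≥ 0, ∀ x y : ℝ, 0 ≤ x → 0 ≤ y →
      C * (x ^ (1 + α) * y ^ (1 - α)) ≤ ε * x ^ 2 + M * y ^ 2 := by
  have hC1 : 0 < C + 1 := by linarith
  obtain ⟨M, hM, hyoung⟩ := exists_rpow_mul_rpow_le hα₀ hα₁ (div_pos hε hC1)
  refine ⟨(C + 1) * M, by positivity, fun x y hx hy => ?_⟩
  calc C * (x ^ (1 + α) * y ^ (1 - α))
      ≤ (C + 1) * (x ^ (1 + α) * y ^ (1 - α)) := by gcongr; linarith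
    _ ≤ (C + 1) * (ε / (C + 1) * x ^ 2 + M * y ^ 2) := by gcongr; exact hyoung x y hx hy
    _ = ε * x ^ 2 + (C + 1) * M * y ^ 2 := by field_simp

end Young

section Coercive

variable {X : Type*} {n m f g : X → ℝ}

theorem exists_coercive_add_of_small
    (hg : ∀ ε > 0, ∃ M ≥ 0, ∀ x, |g x| ≤ ε * n x + M * m x)
    (hf : ∃ α₀ > 0, ∃ ω₀ ≥ 0, ∀ x, α₀ * n x - ω₀ * m x ≤ f x) :
    ∃ α₁ > 0, ∃ ω₁ ≥ 0, ∀ x, α₁ * n x - ω₁ * m x ≤ f x + g x := by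
  obtain ⟨α₀, hα₀, ω₀, hω₀, hf⟩ := hf
  obtain ⟨M, hM, hgM⟩ := hg (α₀ / 2) (by positivity)
  refine ⟨α₀ / 2, by positivity, ω₀ + M, by positivity, fun x => ?_⟩
  linarith [hf x, neg_abs_le (g x), hgM x]

theorem exists_coercive_iff_add_of_small
    (hg : ∀ ε > 0, ∃ M ≥ 0, ∀ x, |g x| ≤ ε * n x + M * m x) :
    (∃ α₀ > 0, ∃ ω₀ ≥ 0, ∀ x, α₀ * n x - ω₀ * m x ≤ f x) ↔
      ∃ α₁ > 0, ∃ ω₁ ≥ 0, ∀ x, α₁ * n x - ω₁ * m x ≤ f x + g x := by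
  refine ⟨exists_coercive_add_of_small hg, fun h => ?_⟩
  have hg' : ∀ ε > 0, ∃ M ≥ 0, ∀ x, |(-g) x| ≤ ε * n x + M * m x := by
    simpa only [Pi.neg_apply, abs_neg] using hg
  simpa only [Pi.neg_apply, add_neg_cancel_right] using exists_coercive_add_of_small hg' h

end Coercive

section Forms

variable {V H : Type*} [NormedAddCommGroup V] [NormedSpace ℂ V]
  [NormedAddCommGroup H] [NormedSpace ℂ H]

theorem abs_re_add_le_rpow_mul_rpow (J : V →L[ℂ] H) (b c : V →ₗ[ℂ] V →ₛₗ[starRingEnd ℂ] ℂ)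
    {α : ℝ} (hα : 1 + α ≠ 0) {C₁ C₂ : ℝ}
    (hb : ∀ u v : V, ‖b u v‖ ≤ C₁ * ‖u‖ * ‖v‖ ^ α * ‖J v‖ ^ (1 - α))
    (hc : ∀ u v : V, ‖c u v‖ ≤ C₂ * ‖u‖ ^ α * ‖J u‖ ^ (1 - α) * ‖v‖) (u : V) :
    |(b u u + c u u).re| ≤ (C₁ + C₂) * (‖u‖ ^ (1 + α) * ‖J u‖ ^ (1 - α)) := by
  have hpow : ‖u‖ ^ (1 + α) = ‖u‖ * ‖u‖ ^ α := by
    rw [Real.rpow_add' (norm_nonneg u) hα, Real.rpow_one]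
  calc |(b u u + c u u).re| ≤ ‖b u u + c u u‖ := Complex.abs_re_le_norm _
    _ ≤ ‖b u u‖ + ‖c u u‖ := norm_add_le _ _
    _ ≤ C₁ * ‖u‖ * ‖u‖ ^ α * ‖J u‖ ^ (1 - α) + C₂ * ‖u‖ ^ α * ‖J u‖ ^ (1 - α) * ‖u‖ :=
        add_le_add (hb u u) (hc u u)
    _ = (C₁ + C₂) * (‖u‖ ^ (1 + α) * ‖J u‖ ^ (1 - α)) := by rw [hpow]; ring

end Forms

theorem stmt1_general {V H : Type*}
    [NormedAddCommGroup V] [InnerProductSpace ℂ V]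
    [NormedAddCommGroup H] [InnerProductSpace ℂ H]
    (J : V →L[ℂ] H)
    (a b c : V →ₗ[ℂ] V →ₛₗ[starRingEnd ℂ] ℂ)
    (α : ℝ) (hα0 : 0 ≤ α) (hα1 : α < 1)
    (C₁ C₂ : ℝ) (hC₁ : 0 ≤ C₁) (hC₂ : 0 ≤ C₂)
    (hb : ∀ u v : V, ‖b u v‖ ≤ C₁ * ‖u‖ * ‖v‖ ^ α * ‖J v‖ ^ (1 - α))
    (hc : ∀ u v : V, ‖c u v‖ ≤ C₂ * ‖u‖ ^ α * ‖J u‖ ^ (1 - α) * ‖v‖) :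
    (∃ α₀ > 0, ∃ ω₀ ≥ 0, ∀ u : V, α₀ * ‖u‖ ^ 2 - ω₀ * ‖J u‖ ^ 2 ≤ (a u u).re) ↔
      (∃ α₁ > 0, ∃ ω₁ ≥ 0, ∀ u : V,
        α₁ * ‖u‖ ^ 2 - ω₁ * ‖J u‖ ^ 2 ≤ (a u u + b u u + c u u).re) := by
  have hsmall : ∀ ε > 0, ∃ M ≥ 0, ∀ u : V,
      |(b u u + c u u).re| ≤ ε * ‖u‖ ^ 2 + M * ‖J u‖ ^ 2 := fun ε hε => by
    obtain ⟨M, hM, hyoung⟩ :=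
      exists_mul_rpow_mul_rpow_le (by linarith) hα1 (add_nonneg hC₁ hC₂) hε
    exact ⟨M, hM, fun u => (abs_re_add_le_rpow_mul_rpow J b c (by linarith) hb hc u).trans
      (hyoung _ _ (norm_nonneg u) (norm_nonneg (J u)))⟩
  simpa only [add_assoc, Complex.add_re] using
    exists_coercive_iff_add_of_small (f := fun u => (a u u).re) hsmall

/-- perturbation lemma. If `b` is continuous on `V × H_α` and `c` on
`H_α × V` (expressed through interpolation-type estimates with exponent `α ∈ [0,1)`),
then `a` is `H`-elliptic (for some constants) iff `a + b + c` is `H`-elliptic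
(for some constants). -/
theorem stmt1 {V H : Type*}
    [NormedAddCommGroup V] [InnerProductSpace ℂ V] [CompleteSpace V]
    [NormedAddCommGroup H] [InnerProductSpace ℂ H] [CompleteSpace H]
    (J : V →L[ℂ] H) (hJinj : Function.Injective J) (hJdense : DenseRange J)
    (a b c : V →ₗ[ℂ] V →ₛₗ[starRingEnd ℂ] ℂ)
    (α : ℝ) (hα0 : 0 ≤ α) (hα1 : α < 1)
    (C₁ C₂ : ℝ) (hC₁ : 0 ≤ C₁) (hC₂ : 0 ≤ C₂)
    (hb : ∀ u v : V, ‖b u v‖ ≤ C₁ * ‖u‖ * ‖v‖ ^ α * ‖J v‖ ^ (1 - α))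
    (hc : ∀ u v : V, ‖c u v‖ ≤ C₂ * ‖u‖ ^ α * ‖J u‖ ^ (1 - α) * ‖v‖) :
    (∃ α₀ > 0, ∃ ω₀ ≥ 0, ∀ u : V, α₀ * ‖u‖ ^ 2 - ω₀ * ‖J u‖ ^ 2 ≤ (a u u).re) ↔
      (∃ α₁ > 0, ∃ ω₁ ≥ 0, ∀ u : V,
        α₁ * ‖u‖ ^ 2 - ω₁ * ‖J u‖ ^ 2 ≤ (a u u + b u u + c u u).re) :=
  stmt1_general J a b c α hα0 hα1 C₁ C₂ hC₁ hC₂ hb hc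
end

section
/- Assume each diagonal form a_{ii} is H_i-elliptic with some constants (α_i, ω_i), and that for every pair i ≠ j there exist α ∈ [0,1) and C ≥ 0 such that either |a_{ij}(f,g)| ≤ C‖f‖_{V_j} ‖g‖_{V_i}^α ‖g‖_{H_i}^{1−α} for all f ∈ V_j, g ∈ V_i, or |a_{ij}(f,g)| ≤ C‖f‖_{V_j}^α ‖f‖_{H_j}^{1−α} ‖g‖_{V_i} for all f ∈ V_j, g ∈ V_i. Then the form 𝔞 is ℋ-elliptic, i.e., there exist constants α > 0 and ω ≥ 0 such that Re 𝔞(𝔣,𝔣) ≥ α‖𝔣‖_𝒱² − ω‖𝔣‖_ℋ² for all 𝔣 ∈ 𝒱. -/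
/-!
Since `α < 1`, weighted AM–GM turns the interpolation factor `‖g‖ ^ α * ‖J g‖ ^ (1 - α)` into
`ε ‖g‖ + K_ε ‖J g‖` with `ε` as small as we like, so each off-diagonal term is bounded by
`ε (‖f‖² + ‖g‖²) + K (‖J f‖² + ‖J g‖²)`. With `ε` small compared with the smallest diagonal
ellipticity constant, the off-diagonal terms are absorbed by the diagonal ones, at the price of a
larger `ω`.
-/

open Finset Filter Topology

theorem Real.rpow_mul_rpow_le_add {α t y z : ℝ} (hα₀ : 0 ≤ α) (hα₁ : α ≤ 1) (ht : 0 < t)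
    (hy : 0 ≤ y) (hz : 0 ≤ z) :
    y ^ α * z ^ (1 - α) ≤ t ^ (1 - α) * y + t ^ (-α) * z := by
  have hp₁ : 0 ≤ t ^ (1 - α) * y := by positivity
  have hp₂ : 0 ≤ t ^ (-α) * z := by positivity
  have hsplit : y ^ α * z ^ (1 - α) = (t ^ (1 - α) * y) ^ α * (t ^ (-α) * z) ^ (1 - α) := by
    rw [Real.mul_rpow (by positivity) hy, Real.mul_rpow (by positivity) hz,
      ← Real.rpow_mul ht.le, ← Real.rpow_mul ht.le]
    calc y ^ α * z ^ (1 - α)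
        = t ^ ((1 - α) * α + -α * (1 - α)) * (y ^ α * z ^ (1 - α)) := by ring_nf; simp
      _ = _ := by rw [Real.rpow_add ht]; ring
  calc y ^ α * z ^ (1 - α)
      ≤ α * (t ^ (1 - α) * y) + (1 - α) * (t ^ (-α) * z) := by
        rw [hsplit]
        exact Real.geom_mean_le_arith_mean2_weighted hα₀ (by linarith) hp₁ hp₂ (by ring)
    _ ≤ t ^ (1 - α) * y + t ^ (-α) * z :=
        add_le_add (mul_le_of_le_one_left hp₁ hα₁) (mul_le_of_le_one_left hp₂ (by linarith))

theorem eventually_mul_mul_rpow_mul_rpow_le {C α ε : ℝ} (hC : 0 ≤ C) (hα₀ : 0 ≤ α) (hα₁ : α < 1)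
    (hε : 0 < ε) :
    ∀ᶠ K in atTop, ∀ x y z : ℝ, 0 ≤ x → 0 ≤ y → 0 ≤ z →
      C * x * y ^ α * z ^ (1 - α) ≤ ε * x ^ 2 + ε * y ^ 2 + K * z ^ 2 := by
  have h1α : 1 - α ≠ 0 := by linarith
  set t := (ε / (C + 1)) ^ (1 - α)⁻¹
  have ht : 0 < t := by positivity
  have hCt : C * t ^ (1 - α) ≤ ε := by
    rw [Real.rpow_inv_rpow (by positivity) h1α, mul_div_assoc', div_le_iff₀ (by positivity)]
    nlinarith
  set L := C * t ^ (-α)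
  filter_upwards [eventually_ge_atTop (L ^ 2 / (2 * ε))] with K hK x y z hx hy hz
  have hK' : L ^ 2 ≤ 2 * ε * K := by rwa [div_le_iff₀' (by positivity)] at hK
  have hxy : C * t ^ (1 - α) * (x * y) ≤ ε / 2 * x ^ 2 + ε / 2 * y ^ 2 := by
    nlinarith [sq_nonneg (x - y), mul_nonneg hx hy]
  have hxz : L * (x * z) ≤ ε / 2 * x ^ 2 + K * z ^ 2 := by
    have : 2 * ε * (L * (x * z)) ≤ 2 * ε * (ε / 2 * x ^ 2 + K * z ^ 2) := by
      nlinarith [sq_nonneg (ε * x - L * z), mul_le_mul_of_nonneg_right hK' (sq_nonneg z)]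
    exact le_of_mul_le_mul_left this (by positivity)
  calc C * x * y ^ α * z ^ (1 - α) = C * x * (y ^ α * z ^ (1 - α)) := by ring
    _ ≤ C * x * (t ^ (1 - α) * y + t ^ (-α) * z) := by
        gcongr; exact Real.rpow_mul_rpow_le_add hα₀ hα₁.le ht hy hz
    _ = C * t ^ (1 - α) * (x * y) + L * (x * z) := by ring
    _ ≤ ε * x ^ 2 + ε * y ^ 2 + K * z ^ 2 := by linarith [mul_nonneg hε.le (sq_nonneg y)]

theorem eventually_norm_le_of_interpolation_bound {E F E' F' G : Type*}
    [SeminormedAddCommGroup E] [SeminormedAddCommGroup F] [SeminormedAddCommGroup E']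
    [SeminormedAddCommGroup F'] [Norm G] {b : E → F → G} {jE : E → E'} {jF : F → F'}
    {C α ε : ℝ} (hC : 0 ≤ C) (hα₀ : 0 ≤ α) (hα₁ : α < 1) (hε : 0 < ε)
    (hb : (∀ f g, ‖b f g‖ ≤ C * ‖f‖ * ‖g‖ ^ α * ‖jF g‖ ^ (1 - α)) ∨
      (∀ f g, ‖b f g‖ ≤ C * ‖f‖ ^ α * ‖jE f‖ ^ (1 - α) * ‖g‖)) :
    ∀ᶠ K in atTop, ∀ f g,
      ‖b f g‖ ≤ ε * (‖f‖ ^ 2 + ‖g‖ ^ 2) + K * (‖jE f‖ ^ 2 + ‖jF g‖ ^ 2) := by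
  filter_upwards [eventually_mul_mul_rpow_mul_rpow_le hC hα₀ hα₁ hε, eventually_ge_atTop 0]
    with K hK hK₀ f g
  rcases hb with hb | hb
  · calc ‖b f g‖ ≤ C * ‖f‖ * ‖g‖ ^ α * ‖jF g‖ ^ (1 - α) := hb f g
      _ ≤ ε * ‖f‖ ^ 2 + ε * ‖g‖ ^ 2 + K * ‖jF g‖ ^ 2 :=
          hK _ _ _ (norm_nonneg _) (norm_nonneg _) (norm_nonneg _)
      _ ≤ _ := by nlinarith [mul_nonneg hK₀ (sq_nonneg ‖jE f‖)]
  · calc ‖b f g‖ ≤ C * ‖f‖ ^ α * ‖jE f‖ ^ (1 - α) * ‖g‖ := hb f g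
      _ = C * ‖g‖ * ‖f‖ ^ α * ‖jE f‖ ^ (1 - α) := by ring
      _ ≤ ε * ‖g‖ ^ 2 + ε * ‖f‖ ^ 2 + K * ‖jE f‖ ^ 2 :=
          hK _ _ _ (norm_nonneg _) (norm_nonneg _) (norm_nonneg _)
      _ ≤ _ := by nlinarith [mul_nonneg hK₀ (sq_nonneg ‖jF g‖)]

theorem Finite.exists_gt_forall_le {ι α : Type*} [Finite ι] [LinearOrder α] [TopologicalSpace α]
    [OrderTopology α] [DenselyOrdered α] [NoMaxOrder α] {a : α} {c : ι → α}
    (hc : ∀ i, a < c i) : ∃ c₀ > a, ∀ i, c₀ ≤ c i :=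
  ((eventually_all.2 fun i => eventually_nhdsWithin_of_eventually_nhds
    (eventually_le_nhds (hc i))).and (self_mem_nhdsWithin : Set.Ioi a ∈ 𝓝[>] a)).exists.imp
    fun _ h => ⟨h.2, h.1⟩

theorem le_sum_sum_of_diag_of_offDiag {ι : Type*} [Fintype ι] {r : ι → ι → ℝ} {x z : ι → ℝ}
    {α ω ε K : ℝ} (hε : 0 ≤ ε) (hK : 0 ≤ K)
    (hdiag : ∀ i, α * x i ^ 2 - ω * z i ^ 2 ≤ r i i)
    (hoff : ∀ i j, i ≠ j → -(ε * (x j ^ 2 + x i ^ 2) + K * (z j ^ 2 + z i ^ 2)) ≤ r i j) :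
    (α - 2 * Fintype.card ι * ε) * ∑ i, x i ^ 2 - (ω + 2 * Fintype.card ι * K) * ∑ i, z i ^ 2 ≤
      ∑ i, ∑ j, r i j := by
  classical
  set b := fun i j => ε * (x j ^ 2 + x i ^ 2) + K * (z j ^ 2 + z i ^ 2)
  have hb : ∀ i j, 0 ≤ b i j := fun i j => by positivity
  have hrow : ∀ i, r i i - ∑ j, b i j ≤ ∑ j, r i j := by
    intro i
    have hsplit := add_sum_erase univ (fun j => r i j) (mem_univ i)
    have : -∑ j, b i j ≤ ∑ j ∈ univ.erase i, r i j := calc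
      -∑ j, b i j ≤ -∑ j ∈ univ.erase i, b i j :=
          neg_le_neg (sum_le_sum_of_subset_of_nonneg (erase_subset _ _) fun j _ _ => hb i j)
      _ = ∑ j ∈ univ.erase i, -b i j := by rw [sum_neg_distrib]
      _ ≤ _ := sum_le_sum fun j hj => hoff i j (ne_of_mem_erase hj).symm
    linarith
  have hbsum : ∑ i, ∑ j, b i j = 2 * Fintype.card ι * ε * ∑ i, x i ^ 2 +
      2 * Fintype.card ι * K * ∑ i, z i ^ 2 := by
    simp only [b, mul_add, sum_add_distrib, ← mul_sum, sum_const, card_univ, nsmul_eq_mul]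
    ring
  calc _ = ∑ i, (α * x i ^ 2 - ω * z i ^ 2 - ∑ j, b i j) := by
        rw [sum_sub_distrib, hbsum, sum_sub_distrib, ← mul_sum, ← mul_sum]; ring
    _ ≤ ∑ i, ∑ j, r i j := sum_le_sum fun i _ => (sub_le_sub_right (hdiag i) _).trans (hrow i)

theorem stmt2_general {m : ℕ}
    (H V : Fin m → Type*)
    [∀ i, NormedAddCommGroup (H i)] [∀ i, InnerProductSpace ℂ (H i)]
    [∀ i, NormedAddCommGroup (V i)] [∀ i, InnerProductSpace ℂ (V i)]
    (J : ∀ i, V i →L[ℂ] H i)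
    (a : ∀ i j, V j →ₗ[ℂ] V i →ₛₗ[starRingEnd ℂ] ℂ)
    (hdiag : ∀ i, ∃ αi > (0 : ℝ), ∃ ωi ≥ (0 : ℝ), ∀ f : V i,
      αi * ‖f‖ ^ 2 - ωi * ‖J i f‖ ^ 2 ≤ (a i i f f).re)
    (hoff : ∀ i j, i ≠ j → ∃ α : ℝ, 0 ≤ α ∧ α < 1 ∧ ∃ C ≥ (0 : ℝ),
      (∀ (f : V j) (g : V i),
        ‖a i j f g‖ ≤ C * ‖f‖ * ‖g‖ ^ α * ‖J i g‖ ^ (1 - α)) ∨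
      (∀ (f : V j) (g : V i),
        ‖a i j f g‖ ≤ C * ‖f‖ ^ α * ‖J j f‖ ^ (1 - α) * ‖g‖)) :
    ∃ α > (0 : ℝ), ∃ ω ≥ (0 : ℝ), ∀ f : ∀ i, V i,
      α * (∑ i, ‖f i‖ ^ 2) - ω * (∑ i, ‖J i (f i)‖ ^ 2) ≤
        (∑ i, ∑ j, a i j (f j) (f i)).re := by
  choose αd hαd ωd hωd hdiag using hdiag
  obtain ⟨α₀, hα₀, hα₀_le⟩ := Finite.exists_gt_forall_le hαd
  have hωd_le : ∀ i, ωd i ≤ ∑ j, ωd j := fun i => single_le_sum (fun j _ => hωd j) (mem_univ i)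
  obtain ⟨ε, hε, hεα⟩ : ∃ ε > (0 : ℝ), 2 * m * ε < α₀ := ⟨α₀ / (2 * (m + 1)), by positivity, by
    rw [mul_div_assoc', div_lt_iff₀ (by positivity)]; nlinarith⟩
  obtain ⟨K, hK, hoffK⟩ : ∃ K : ℝ, 0 ≤ K ∧ ∀ i j, i ≠ j → ∀ f g, ‖a i j f g‖ ≤
      ε * (‖f‖ ^ 2 + ‖g‖ ^ 2) + K * (‖J j f‖ ^ 2 + ‖J i g‖ ^ 2) :=
    ((eventually_ge_atTop 0).and <| eventually_all.2 fun i => eventually_all.2 fun j =>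
      eventually_imp_distrib_left.2 fun hij => by
        obtain ⟨β, hβ₀, hβ₁, C, hC, hb⟩ := hoff i j hij
        exact eventually_norm_le_of_interpolation_bound hC hβ₀ hβ₁ hε hb).exists
  refine ⟨α₀ - 2 * m * ε, sub_pos.2 hεα, ∑ i, ωd i + 2 * m * K,
    add_nonneg (sum_nonneg fun i _ => hωd i) (by positivity), fun f => ?_⟩
  simp only [Complex.re_sum]
  simpa using le_sum_sum_of_diag_of_offDiag (r := fun i j => (a i j (f j) (f i)).re)
    (x := fun i => ‖f i‖) (z := fun i => ‖J i (f i)‖) hε.le hK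
    (fun i => (sub_le_sub (mul_le_mul_of_nonneg_right (hα₀_le i) (sq_nonneg _))
      (mul_le_mul_of_nonneg_right (hωd_le i) (sq_nonneg _))).trans (hdiag i (f i)))
    (fun i j hij => (neg_le_neg (hoffK i j hij (f j) (f i))).trans
      (neg_le_of_abs_le (Complex.abs_re_le_norm _)))

/-- If each diagonal form `a i i` is `H i`-elliptic and every off-diagonal
form `a i j` satisfies an interpolation-type continuity estimate (in one of the two variables),
then the form matrix `𝔞(𝔣,𝔤) = ∑ᵢⱼ a i j (f j) (g i)` is `ℋ`-elliptic. -/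
theorem stmt2 {m : ℕ} (hm : 1 ≤ m)
    (H V : Fin m → Type*)
    [∀ i, NormedAddCommGroup (H i)] [∀ i, InnerProductSpace ℂ (H i)] [∀ i, CompleteSpace (H i)]
    [∀ i, NormedAddCommGroup (V i)] [∀ i, InnerProductSpace ℂ (V i)] [∀ i, CompleteSpace (V i)]
    (J : ∀ i, V i →L[ℂ] H i)
    (hJinj : ∀ i, Function.Injective (J i)) (hJdense : ∀ i, DenseRange (J i))
    (a : ∀ i j, V j →ₗ[ℂ] V i →ₛₗ[starRingEnd ℂ] ℂ)
    (hdiag : ∀ i, ∃ αi > (0 : ℝ), ∃ ωi ≥ (0 : ℝ), ∀ f : V i,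
      αi * ‖f‖ ^ 2 - ωi * ‖J i f‖ ^ 2 ≤ (a i i f f).re)
    (hoff : ∀ i j, i ≠ j → ∃ α : ℝ, 0 ≤ α ∧ α < 1 ∧ ∃ C ≥ (0 : ℝ),
      (∀ (f : V j) (g : V i),
        ‖a i j f g‖ ≤ C * ‖f‖ * ‖g‖ ^ α * ‖J i g‖ ^ (1 - α)) ∨
      (∀ (f : V j) (g : V i),
        ‖a i j f g‖ ≤ C * ‖f‖ ^ α * ‖J j f‖ ^ (1 - α) * ‖g‖)) :
    ∃ α > (0 : ℝ), ∃ ω ≥ (0 : ℝ), ∀ f : ∀ i, V i,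
      α * (∑ i, ‖f i‖ ^ 2) - ω * (∑ i, ‖J i (f i)‖ ^ 2) ≤
        (∑ i, ∑ j, a i j (f j) (f i)).re :=
  stmt2_general H V J a hdiag hoff
end

section
/- Assume that for each i the diagonal form a_{ii} is continuous with constant M_{ii} ≥ 0 (i.e., |a_{ii}(u,v)| ≤ M_{ii}‖u‖_{V_i}‖v‖_{V_i}), and that for each i ≠ j there are constants α_{ij} ≤ 0 and ω_{ij} ∈ ℝ with |a_{ij}(f,g)| ≤ −α_{ij}‖f‖_{V_j}‖g‖_{V_i} + ω_{ij}‖f‖_{H_j}‖g‖_{H_i} for all f ∈ V_j, g ∈ V_i. Let 𝐌 be the real m×m matrix with diagonal entries M_{ii} and off-diagonal entries −α_{ij}, and let 𝛀₀ be the real m×m matrix with zero diagonal and off-diagonal entries |ω_{ij}|, both with operator norm ‖·‖ taken with respect to the Euclidean norm. Let 𝔢 ≥ 0 satisfy ‖𝔣‖_ℋ ≤ 𝔢‖𝔣‖_𝒱 for all 𝔣 ∈ 𝒱. Then |𝔞(𝔣,𝔤)| ≤ (‖𝐌‖ + ‖𝛀₀‖𝔢²)‖𝔣‖_𝒱‖𝔤‖_𝒱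 for all 𝔣, 𝔤 ∈ 𝒱. -/
/-!
Each entry satisfies `‖a i j (f j) (g i)‖ ≤ 𝐌 i j ‖f j‖ ‖g i‖ + 𝛀₀ i j ‖f j‖_H ‖g i‖_H`. Summed,
each of the two real double sums is `⟪y, A x⟫` for a matrix `A` and vectors of norms `x`, `y`,
hence at most `‖A‖ |x| |y|`; the embedding constant turns the `H`-norms into `V`-norms.
-/

open Finset WithLp

lemma EuclideanSpace.norm_toLp_eq_sqrt_sum_sq {n : Type*} [Fintype n] (x : n → ℝ) :
    ‖toLp 2 x‖ = √(∑ i, x i ^ 2) := by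
  simp [EuclideanSpace.norm_eq]

namespace Matrix

variable {n : Type*} [Fintype n] [DecidableEq n]

lemma sum_sum_mul_le_norm_toEuclideanCLM (A : Matrix n n ℝ) (x y : n → ℝ) :
    ∑ i, ∑ j, A i j * x j * y i ≤
      ‖toEuclideanCLM (𝕜 := ℝ) A‖ * (√(∑ i, x i ^ 2) * √(∑ i, y i ^ 2)) := by
  have hinner : ∑ i, ∑ j, A i j * x j * y i =
      inner ℝ (toLp 2 y) (toEuclideanCLM (𝕜 := ℝ) A (toLp 2 x)) := by
    rw [inner_toEuclideanCLM]
    simp [dotProduct, mulVec, mul_sum, mul_comm, mul_left_comm]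
  rw [hinner, ← EuclideanSpace.norm_toLp_eq_sqrt_sum_sq,
    ← EuclideanSpace.norm_toLp_eq_sqrt_sum_sq]
  calc _ ≤ ‖toLp 2 y‖ * ‖toEuclideanCLM (𝕜 := ℝ) A (toLp 2 x)‖ := real_inner_le_norm _ _
    _ ≤ ‖toLp 2 y‖ * (‖toEuclideanCLM (𝕜 := ℝ) A‖ * ‖toLp 2 x‖) := by
      gcongr
      exact (toEuclideanCLM (𝕜 := ℝ) A).le_opNorm _
    _ = _ := by ring

lemma norm_sum_sum_le_of_le {E : Type*} [SeminormedAddCommGroup E] (c : n → n → E)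
    (A B : Matrix n n ℝ) (x y u v : n → ℝ)
    (h : ∀ i j, ‖c i j‖ ≤ A i j * x j * y i + B i j * u j * v i) :
    ‖∑ i, ∑ j, c i j‖ ≤
      ‖toEuclideanCLM (𝕜 := ℝ) A‖ * (√(∑ i, x i ^ 2) * √(∑ i, y i ^ 2)) +
        ‖toEuclideanCLM (𝕜 := ℝ) B‖ * (√(∑ i, u i ^ 2) * √(∑ i, v i ^ 2)) :=
  calc ‖∑ i, ∑ j, c i j‖ ≤ ∑ i, ∑ j, ‖c i j‖ := norm_sum_le_of_le _ fun i _ => norm_sum_le _ _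
    _ ≤ ∑ i, ∑ j, (A i j * x j * y i + B i j * u j * v i) := by gcongr with i _ j _; exact h i j
    _ = ∑ i, ∑ j, A i j * x j * y i + ∑ i, ∑ j, B i j * u j * v i := by
      simp only [sum_add_distrib]
    _ ≤ _ := add_le_add (sum_sum_mul_le_norm_toEuclideanCLM A x y)
      (sum_sum_mul_le_norm_toEuclideanCLM B u v)

end Matrix

theorem stmt3_general {m : ℕ}
    (H V : Fin m → Type*)
    [∀ i, NormedAddCommGroup (H i)] [∀ i, InnerProductSpace ℂ (H i)]
    [∀ i, NormedAddCommGroup (V i)] [∀ i, InnerProductSpace ℂ (V i)]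
    (J : ∀ i, V i →L[ℂ] H i)
    (a : ∀ i j, V j →ₗ[ℂ] V i →ₛₗ[starRingEnd ℂ] ℂ)
    (M : Fin m → ℝ)
    (hdiag : ∀ i (u v : V i), ‖a i i u v‖ ≤ M i * ‖u‖ * ‖v‖)
    (αm ωm : Fin m → Fin m → ℝ)
    (hoff : ∀ i j, i ≠ j → ∀ (f : V j) (g : V i),
      ‖a i j f g‖ ≤ -(αm i j) * ‖f‖ * ‖g‖ + ωm i j * ‖J j f‖ * ‖J i g‖)
    (e : ℝ)
    (hemb : ∀ f : ∀ i, V i,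
      Real.sqrt (∑ i, ‖J i (f i)‖ ^ 2) ≤ e * Real.sqrt (∑ i, ‖f i‖ ^ 2)) :
    ∀ f g : ∀ i, V i,
      ‖∑ i, ∑ j, a i j (f j) (g i)‖ ≤
        (‖Matrix.toEuclideanCLM (𝕜 := ℝ)
            (Matrix.of fun i j => if i = j then M i else -(αm i j))‖ +
          ‖Matrix.toEuclideanCLM (𝕜 := ℝ)
            (Matrix.of fun i j => if i = j then 0 else |ωm i j|)‖ * e ^ 2) *
          (Real.sqrt (∑ i, ‖f i‖ ^ 2) * Real.sqrt (∑ i, ‖g i‖ ^ 2)) := by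
  intro f g
  have entry : ∀ i j, ‖a i j (f j) (g i)‖ ≤
      (Matrix.of fun i j => if i = j then M i else -(αm i j)) i j * ‖f j‖ * ‖g i‖ +
        (Matrix.of fun i j => if i = j then 0 else |ωm i j|) i j * ‖J j (f j)‖ * ‖J i (g i)‖ := by
    intro i j
    rcases eq_or_ne i j with rfl | hij
    · simpa using hdiag i (f i) (g i)
    · simp only [Matrix.of_apply, if_neg hij]
      refine (hoff i j hij _ _).trans ?_
      gcongr
      exact le_abs_self _
  refine (Matrix.norm_sum_sum_le_of_le _ _ _ _ _ _ _ entry).trans ?_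
  have hJf := hemb f
  have hJg := hemb g
  have hef : 0 ≤ e * √(∑ i, ‖f i‖ ^ 2) := (Real.sqrt_nonneg _).trans hJf
  calc _ ≤ _ * (√(∑ i, ‖f i‖ ^ 2) * √(∑ i, ‖g i‖ ^ 2)) +
        _ * ((e * √(∑ i, ‖f i‖ ^ 2)) * (e * √(∑ i, ‖g i‖ ^ 2))) := by gcongr
    _ = _ := by ring

/-- continuity estimate for the form matrix. With diagonal forms continuous
with constants `M i` and off-diagonal forms satisfying
`|a i j (f,g)| ≤ -α i j ‖f‖_{V j} ‖g‖_{V i} + ω i j ‖f‖_{H j} ‖g‖_{H i}` (`α i j ≤ 0`),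
one has `|𝔞(𝔣,𝔤)| ≤ (‖𝐌‖ + ‖𝛀₀‖ 𝔢²) ‖𝔣‖_𝒱 ‖𝔤‖_𝒱`, where `𝐌` has diagonal `M i` and
off-diagonal `-α i j`, `𝛀₀` has zero diagonal and off-diagonal `|ω i j|`, and `𝔢` bounds the
embedding `𝒱 ↪ ℋ`. -/
theorem stmt3 {m : ℕ} (hm : 1 ≤ m)
    (H V : Fin m → Type*)
    [∀ i, NormedAddCommGroup (H i)] [∀ i, InnerProductSpace ℂ (H i)] [∀ i, CompleteSpace (H i)]
    [∀ i, NormedAddCommGroup (V i)] [∀ i, InnerProductSpace ℂ (V i)] [∀ i, CompleteSpace (V i)]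
    (J : ∀ i, V i →L[ℂ] H i)
    (hJinj : ∀ i, Function.Injective (J i)) (hJdense : ∀ i, DenseRange (J i))
    (a : ∀ i j, V j →ₗ[ℂ] V i →ₛₗ[starRingEnd ℂ] ℂ)
    (M : Fin m → ℝ) (hM : ∀ i, 0 ≤ M i)
    (hdiag : ∀ i (u v : V i), ‖a i i u v‖ ≤ M i * ‖u‖ * ‖v‖)
    (αm ωm : Fin m → Fin m → ℝ)
    (hαm : ∀ i j, i ≠ j → αm i j ≤ 0)
    (hoff : ∀ i j, i ≠ j → ∀ (f : V j) (g : V i),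
      ‖a i j f g‖ ≤ -(αm i j) * ‖f‖ * ‖g‖ + ωm i j * ‖J j f‖ * ‖J i g‖)
    (e : ℝ) (he : 0 ≤ e)
    (hemb : ∀ f : ∀ i, V i,
      Real.sqrt (∑ i, ‖J i (f i)‖ ^ 2) ≤ e * Real.sqrt (∑ i, ‖f i‖ ^ 2)) :
    ∀ f g : ∀ i, V i,
      ‖∑ i, ∑ j, a i j (f j) (g i)‖ ≤
        (‖Matrix.toEuclideanCLM (𝕜 := ℝ)
            (Matrix.of fun i j => if i = j then M i else -(αm i j))‖ +
          ‖Matrix.toEuclideanCLM (𝕜 := ℝ)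
            (Matrix.of fun i j => if i = j then 0 else |ωm i j|)‖ * e ^ 2) *
          (Real.sqrt (∑ i, ‖f i‖ ^ 2) * Real.sqrt (∑ i, ‖g i‖ ^ 2)) :=
  stmt3_general H V J a M hdiag αm ωm hoff e hemb
end

section
/- Assume each diagonal form a_{ii} is H_i-elliptic with constants (α_{ii}, ω_{ii}), i.e., Re a_{ii}(f,f) ≥ α_{ii}‖f‖_{V_i}² − ω_{ii}‖f‖_{H_i}², and that for each i ≠ j there are constants α_{ij} ≤ 0 and ω_{ij} ∈ ℝ with |a_{ij}(f,g)| ≤ −α_{ij}‖f‖_{V_j}‖g‖_{V_i} + ω_{ij}‖f‖_{H_j}‖g‖_{H_i} for all f ∈ V_j, g ∈ V_i. Let 𝐀 = (α_{ij})_{1≤i,j≤m} and 𝛀 = (ω_{ij})_{1≤i,j≤m}, and assume 𝐀 is positive definite with constant α > 0, i.e., Re⟨𝐀ξ, ξ⟩ ≥ α|ξ|² for all ξ ∈ ℂ^m. Then 𝔞 is ℋ-elliptic with constants (α, ‖𝛀‖): Re 𝔞(𝔣,𝔣) ≥ α‖𝔣‖_𝒱² − ‖𝛀‖‖𝔣‖_ℋ²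 for all 𝔣 ∈ 𝒱, where ‖𝛀‖ is the operator norm of 𝛀 with respect to the Euclidean norm. -/
open Finset Matrix

/-
The proof is entrywise: the diagonal ellipticity and the off-diagonal bounds give
`Re a_{ij}(f_j, f_i) ≥ α_{ij} r_j r_i - ω_{ij} s_j s_i` with `r_i = ‖f_i‖_{V_i}` and
`s_i = ‖f_i‖_{H_i}`, since `Re z ≥ -|z|`. Summing over `i, j` bounds `Re 𝔞(𝔣, 𝔣)` below by
`⟨𝐀 r, r⟩ - ⟨𝛀 s, s⟩`. Positive definiteness of `𝐀`, tested on the real vector `r`, gives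
`⟨𝐀 r, r⟩ ≥ α |r|² = α ‖𝔣‖_𝒱²`, and `⟨𝛀 s, s⟩ ≤ ‖𝛀‖ |s|² = ‖𝛀‖ ‖𝔣‖_ℋ²`.
-/

namespace Matrix

variable {n : Type*} [Fintype n]

lemma dotProduct_mulVec_le_norm_toEuclideanCLM_mul [DecidableEq n] (M : Matrix n n ℝ)
    (x : n → ℝ) : x ⬝ᵥ M *ᵥ x ≤ ‖toEuclideanCLM (𝕜 := ℝ) M‖ * ∑ i, x i ^ 2 := by
  set T := toEuclideanCLM (𝕜 := ℝ) M
  set y : EuclideanSpace ℝ n := WithLp.toLp 2 x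
  have hy : ‖y‖ ^ 2 = ∑ i, x i ^ 2 := by
    simp [y, EuclideanSpace.norm_sq_eq]
  calc x ⬝ᵥ M *ᵥ x = inner ℝ y (T y) := (inner_toEuclideanCLM M y y).symm
    _ ≤ ‖y‖ * ‖T y‖ := real_inner_le_norm _ _
    _ ≤ ‖y‖ * (‖T‖ * ‖y‖) := by gcongr; exact T.le_opNorm y
    _ = ‖T‖ * ∑ i, x i ^ 2 := by rw [← hy]; ring

lemma re_sum_ofReal_mul_conj (M : Matrix n n ℝ) (x : n → ℝ) :
    (∑ i, (∑ j, (M i j : ℂ) * x j) * starRingEnd ℂ (x i)).re = x ⬝ᵥ M *ᵥ x := by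
  simp only [Complex.conj_ofReal, ← Complex.ofReal_mul, ← Complex.ofReal_sum, Complex.ofReal_re,
    dotProduct, mulVec, sum_mul, mul_sum]
  exact sum_congr rfl fun i _ => sum_congr rfl fun j _ => by ring

lemma dotProduct_mulVec_sub_dotProduct_mulVec (A B : Matrix n n ℝ) (x y : n → ℝ) :
    x ⬝ᵥ A *ᵥ x - y ⬝ᵥ B *ᵥ y = ∑ i, ∑ j, (A i j * x j * x i - B i j * y j * y i) := by
  simp only [dotProduct, mulVec, mul_sum, ← sum_sub_distrib]
  exact sum_congr rfl fun i _ => sum_congr rfl fun j _ => by ring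

end Matrix

theorem stmt6_general {m : ℕ}
    (H V : Fin m → Type*)
    [∀ i, NormedAddCommGroup (H i)] [∀ i, InnerProductSpace ℂ (H i)]
    [∀ i, NormedAddCommGroup (V i)] [∀ i, InnerProductSpace ℂ (V i)]
    (J : ∀ i, V i →L[ℂ] H i)
    (a : ∀ i j, V j →ₗ[ℂ] V i →ₛₗ[starRingEnd ℂ] ℂ)
    (A Ω : Matrix (Fin m) (Fin m) ℝ)
    (hdiag : ∀ i (f : V i),
      A i i * ‖f‖ ^ 2 - Ω i i * ‖J i f‖ ^ 2 ≤ (a i i f f).re)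
    (hoff : ∀ i j, i ≠ j → ∀ (f : V j) (g : V i),
      ‖a i j f g‖ ≤ -(A i j) * ‖f‖ * ‖g‖ + Ω i j * ‖J j f‖ * ‖J i g‖)
    (α : ℝ)
    (hposdef : ∀ ξ : Fin m → ℂ,
      α * ∑ i, ‖ξ i‖ ^ 2 ≤
        (∑ i, (∑ j, (A i j : ℂ) * ξ j) * (starRingEnd ℂ) (ξ i)).re) :
    ∀ f : ∀ i, V i,
      α * (∑ i, ‖f i‖ ^ 2) -
          ‖Matrix.toEuclideanCLM (𝕜 := ℝ) Ω‖ * (∑ i, ‖J i (f i)‖ ^ 2) ≤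
        (∑ i, ∑ j, a i j (f j) (f i)).re := by
  intro f
  have hterm : ∀ i j, A i j * ‖f j‖ * ‖f i‖ - Ω i j * ‖J j (f j)‖ * ‖J i (f i)‖ ≤
      (a i j (f j) (f i)).re := by
    intro i j
    rcases eq_or_ne i j with rfl | hij
    · simpa only [mul_assoc, ← sq] using hdiag i (f i)
    · linarith [hoff i j hij (f j) (f i),
        neg_le_of_abs_le (Complex.abs_re_le_norm (a i j (f j) (f i)))]
  have hA : α * ∑ i, ‖f i‖ ^ 2 ≤ (fun i ↦ ‖f i‖) ⬝ᵥ A *ᵥ fun i ↦ ‖f i‖ := by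
    simpa only [Complex.norm_real, norm_norm, re_sum_ofReal_mul_conj]
      using hposdef fun i ↦ (‖f i‖ : ℂ)
  calc α * ∑ i, ‖f i‖ ^ 2 - ‖toEuclideanCLM (𝕜 := ℝ) Ω‖ * ∑ i, ‖J i (f i)‖ ^ 2
      ≤ (fun i ↦ ‖f i‖) ⬝ᵥ A *ᵥ (fun i ↦ ‖f i‖) -
          (fun i ↦ ‖J i (f i)‖) ⬝ᵥ Ω *ᵥ (fun i ↦ ‖J i (f i)‖) :=
        sub_le_sub hA (dotProduct_mulVec_le_norm_toEuclideanCLM_mul Ω _)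
    _ = ∑ i, ∑ j, (A i j * ‖f j‖ * ‖f i‖ - Ω i j * ‖J j (f j)‖ * ‖J i (f i)‖) :=
        dotProduct_mulVec_sub_dotProduct_mulVec A Ω _ _
    _ ≤ ∑ i, ∑ j, (a i j (f j) (f i)).re := sum_le_sum fun i _ ↦ sum_le_sum fun j _ ↦ hterm i j
    _ = (∑ i, ∑ j, a i j (f j) (f i)).re := by simp only [Complex.re_sum]

/-- If each `a i i` is `H i`-elliptic with constants `(A i i, Ω i i)`,
the off-diagonal entries satisfy `|a i j (f,g)| ≤ -(A i j)‖f‖_{V j}‖g‖_{V i} +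
Ω i j ‖f‖_{H j}‖g‖_{H i}` with `A i j ≤ 0`, and the matrix `𝐀 = (A i j)` is positive
definite with constant `α > 0`, then `𝔞` is `ℋ`-elliptic with constants `(α, ‖𝛀‖)`. -/
theorem stmt6 {m : ℕ} (hm : 1 ≤ m)
    (H V : Fin m → Type*)
    [∀ i, NormedAddCommGroup (H i)] [∀ i, InnerProductSpace ℂ (H i)] [∀ i, CompleteSpace (H i)]
    [∀ i, NormedAddCommGroup (V i)] [∀ i, InnerProductSpace ℂ (V i)] [∀ i, CompleteSpace (V i)]
    (J : ∀ i, V i →L[ℂ] H i)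
    (hJinj : ∀ i, Function.Injective (J i)) (hJdense : ∀ i, DenseRange (J i))
    (a : ∀ i j, V j →ₗ[ℂ] V i →ₛₗ[starRingEnd ℂ] ℂ)
    (A Ω : Matrix (Fin m) (Fin m) ℝ)
    (hAdiag : ∀ i, 0 < A i i) (hΩdiag : ∀ i, 0 ≤ Ω i i)
    (hdiag : ∀ i (f : V i),
      A i i * ‖f‖ ^ 2 - Ω i i * ‖J i f‖ ^ 2 ≤ (a i i f f).re)
    (hAoff : ∀ i j, i ≠ j → A i j ≤ 0)
    (hoff : ∀ i j, i ≠ j → ∀ (f : V j) (g : V i),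
      ‖a i j f g‖ ≤ -(A i j) * ‖f‖ * ‖g‖ + Ω i j * ‖J j f‖ * ‖J i g‖)
    (α : ℝ) (hα : 0 < α)
    (hposdef : ∀ ξ : Fin m → ℂ,
      α * ∑ i, ‖ξ i‖ ^ 2 ≤
        (∑ i, (∑ j, (A i j : ℂ) * ξ j) * (starRingEnd ℂ) (ξ i)).re) :
    ∀ f : ∀ i, V i,
      α * (∑ i, ‖f i‖ ^ 2) -
          ‖Matrix.toEuclideanCLM (𝕜 := ℝ) Ω‖ * (∑ i, ‖J i (f i)‖ ^ 2) ≤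
        (∑ i, ∑ j, a i j (f j) (f i)).re :=
  stmt6_general H V J a A Ω hdiag hoff α hposdef
end

section
/- Assume each diagonal form a_{ii} is accretive (Re a_{ii}(f,f) ≥ 0 for all f ∈ V_i), and that for each i ≠ j there are constants α_{ij} ≤ 0 and ω_{ij} ∈ ℝ with |a_{ij}(f,g)| ≤ −α_{ij}‖f‖_{V_j}‖g‖_{V_i} + ω_{ij}‖f‖_{H_j}‖g‖_{H_i} for all f ∈ V_j, g ∈ V_i. Let 𝐀₀ be the m×m matrix with zero diagonal and off-diagonal entries α_{ij}, and 𝛀₀ the m×m matrix with zero diagonal and off-diagonal entries ω_{ij}. If Re⟨𝐀₀ξ, ξ⟩ ≥ 0 and Re⟨𝛀₀ξ, ξ⟩ ≤ 0 for all ξ ∈ ℂ^m, then 𝔞 is accretive, i.e., Re 𝔞(𝔣,𝔣) ≥ 0 for all 𝔣 ∈ 𝒱. -/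
open Finset

theorem Complex.re_sum_sum_ofReal_mul_conj {ι : Type*} [Fintype ι] (M : ι → ι → ℝ)
    (x : ι → ℝ) :
    (∑ i, (∑ j, (M i j : ℂ) * (x j : ℂ)) * starRingEnd ℂ (x i : ℂ)).re =
      ∑ i, ∑ j, M i j * x j * x i := by
  simp only [Complex.conj_ofReal, sum_mul, ← Complex.ofReal_mul, ← Complex.ofReal_sum,
    Complex.ofReal_re]

/-- Summing the entrywise lower bounds `Re b i j ≥ α i j p j p i - ω i j q j q i` reduces
accretivity of the block matrix to the semidefiniteness of the off-diagonal parts of `α` and `ω`. -/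
theorem Complex.re_sum_sum_nonneg_of_offDiag_bound {ι : Type*} [Fintype ι] [DecidableEq ι]
    (b : ι → ι → ℂ) (α ω : ι → ι → ℝ) (p q : ι → ℝ)
    (hdiag : ∀ i, 0 ≤ (b i i).re)
    (hoff : ∀ i j, i ≠ j → ‖b i j‖ ≤ -α i j * p j * p i + ω i j * q j * q i)
    (hα : 0 ≤ ∑ i, ∑ j, (if i = j then 0 else α i j) * p j * p i)
    (hω : ∑ i, ∑ j, (if i = j then 0 else ω i j) * q j * q i ≤ 0) :
    0 ≤ (∑ i, ∑ j, b i j).re := by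
  have hentry : ∀ i j, (if i = j then 0 else α i j) * p j * p i
      - (if i = j then 0 else ω i j) * q j * q i ≤ (b i j).re := by
    intro i j
    by_cases hij : i = j
    · subst hij
      simpa using hdiag i
    · simp only [if_neg hij]
      linarith [hoff i j hij, neg_le_of_abs_le (Complex.abs_re_le_norm (b i j))]
  calc (0 : ℝ)
      ≤ ∑ i, ∑ j, ((if i = j then 0 else α i j) * p j * p i
          - (if i = j then 0 else ω i j) * q j * q i) := by
        simp only [sum_sub_distrib]
        linarith
    _ ≤ (∑ i, ∑ j, b i j).re := by
        simp only [Complex.re_sum]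
        exact sum_le_sum fun i _ => sum_le_sum fun j _ => hentry i j

theorem stmt8_general {m : ℕ}
    (H V : Fin m → Type*)
    [∀ i, NormedAddCommGroup (H i)] [∀ i, InnerProductSpace ℂ (H i)]
    [∀ i, NormedAddCommGroup (V i)] [∀ i, InnerProductSpace ℂ (V i)]
    (J : ∀ i, V i →L[ℂ] H i)
    (a : ∀ i j, V j →ₗ[ℂ] V i →ₛₗ[starRingEnd ℂ] ℂ)
    (hacc : ∀ i (f : V i), 0 ≤ (a i i f f).re)
    (αm ωm : Fin m → Fin m → ℝ)
    (hoff : ∀ i j, i ≠ j → ∀ (f : V j) (g : V i),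
      ‖a i j f g‖ ≤ -(αm i j) * ‖f‖ * ‖g‖ + ωm i j * ‖J j f‖ * ‖J i g‖)
    (hA₀ : ∀ ξ : Fin m → ℂ,
      0 ≤ (∑ i, (∑ j, ((if i = j then 0 else αm i j : ℝ) : ℂ) * ξ j) *
        (starRingEnd ℂ) (ξ i)).re)
    (hΩ₀ : ∀ ξ : Fin m → ℂ,
      (∑ i, (∑ j, ((if i = j then 0 else ωm i j : ℝ) : ℂ) * ξ j) *
        (starRingEnd ℂ) (ξ i)).re ≤ 0) :
    ∀ f : ∀ i, V i, 0 ≤ (∑ i, ∑ j, a i j (f j) (f i)).re := by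
  intro f
  have hα := hA₀ fun i => (‖f i‖ : ℂ)
  have hω := hΩ₀ fun i => (‖J i (f i)‖ : ℂ)
  rw [Complex.re_sum_sum_ofReal_mul_conj] at hα hω
  exact Complex.re_sum_sum_nonneg_of_offDiag_bound (fun i j => a i j (f j) (f i)) αm ωm
    (fun i => ‖f i‖) (fun i => ‖J i (f i)‖) (fun i => hacc i (f i))
    (fun i j hij => hoff i j hij (f j) (f i)) hα hω

/-- If each diagonal form `a i i` is accretive, the off-diagonal entries
satisfy `|a i j (f,g)| ≤ -(α i j)‖f‖_{V j}‖g‖_{V i} + ω i j ‖f‖_{H j}‖g‖_{H i}` with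
`α i j ≤ 0`, and the off-diagonal matrices `𝐀₀ = (α i j)` and `𝛀₀ = (ω i j)` (zero diagonal)
are positive resp. negative semidefinite, then the form matrix `𝔞` is accretive. -/
theorem stmt8 {m : ℕ} (hm : 1 ≤ m)
    (H V : Fin m → Type*)
    [∀ i, NormedAddCommGroup (H i)] [∀ i, InnerProductSpace ℂ (H i)] [∀ i, CompleteSpace (H i)]
    [∀ i, NormedAddCommGroup (V i)] [∀ i, InnerProductSpace ℂ (V i)] [∀ i, CompleteSpace (V i)]
    (J : ∀ i, V i →L[ℂ] H i)
    (hJinj : ∀ i, Function.Injective (J i)) (hJdense : ∀ i, DenseRange (J i))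
    (a : ∀ i j, V j →ₗ[ℂ] V i →ₛₗ[starRingEnd ℂ] ℂ)
    (hacc : ∀ i (f : V i), 0 ≤ (a i i f f).re)
    (αm ωm : Fin m → Fin m → ℝ)
    (hαm : ∀ i j, i ≠ j → αm i j ≤ 0)
    (hoff : ∀ i j, i ≠ j → ∀ (f : V j) (g : V i),
      ‖a i j f g‖ ≤ -(αm i j) * ‖f‖ * ‖g‖ + ωm i j * ‖J j f‖ * ‖J i g‖)
    (hA₀ : ∀ ξ : Fin m → ℂ,
      0 ≤ (∑ i, (∑ j, ((if i = j then 0 else αm i j : ℝ) : ℂ) * ξ j) *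
        (starRingEnd ℂ) (ξ i)).re)
    (hΩ₀ : ∀ ξ : Fin m → ℂ,
      (∑ i, (∑ j, ((if i = j then 0 else ωm i j : ℝ) : ℂ) * ξ j) *
        (starRingEnd ℂ) (ξ i)).re ≤ 0) :
    ∀ f : ∀ i, V i, 0 ≤ (∑ i, ∑ j, a i j (f j) (f i)).re :=
  stmt8_general H V J a hacc αm ωm hoff hA₀ hΩ₀
end

section
/- Assume there exists M ≥ 0 such that (i) |Im a_{ii}(f,f)| ≤ M‖f‖_{V_i}‖f‖_{H_i} for all f ∈ V_i and all i = 1,…,m, and (ii) either |Im(a_{ij}(f,g) + a_{ji}(g,f))| ≤ M‖f‖_{V_j}‖g‖_{H_i} for all i < j and all f ∈ V_j, g ∈ V_i, or |Im(a_{ij}(f,g) + a_{ji}(g,f))| ≤ M‖f‖_{H_j}‖g‖_{V_i} for all i < j and all f ∈ V_j, g ∈ V_i. Then there exists a constant M̃ ≥ 0 such that |Im 𝔞(𝔣,𝔣)| ≤ M̃‖𝔣‖_𝒱‖𝔣‖_ℋ for all 𝔣 ∈ 𝒱. -/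
/-!
Since `𝔞(𝔣,𝔣) = Σᵢ aᵢᵢ(fᵢ,fᵢ) + Σ_{i<j} (aᵢⱼ(fⱼ,fᵢ) + aⱼᵢ(fᵢ,fⱼ))`, the imaginary part of
`𝔞(𝔣,𝔣)` is a sum of at most `m²` terms, each bounded by hypothesis by `M` times a `V`-norm
and an `H`-norm of components of `𝔣`, hence by `M ‖𝔣‖_𝒱 ‖𝔣‖_ℋ`. So `M̃ = m² M` works.
-/

open Finset

theorem Finset.sum_sum_eq_sum_add_sum_Ioi {ι β : Type*} [AddCommMonoid β] [LinearOrder ι]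
    [Fintype ι] [LocallyFiniteOrderTop ι] [LocallyFiniteOrderBot ι] (c : ι → ι → β) :
    ∑ i, ∑ j, c i j = ∑ i, (c i i + ∑ j ∈ Ioi i, (c i j + c j i)) := by
  rw [sum_add_distrib, sum_sum_Ioi_add_eq_sum_sum_off_diag (fun j i ↦ c i j), ← sum_add_distrib]
  exact sum_congr rfl fun i _ ↦ Fintype.sum_eq_add_sum_compl i (c i)

theorem abs_sum_sum_le_card_sq_mul {ι : Type*} [LinearOrder ι] [Fintype ι]
    [LocallyFiniteOrderTop ι] [LocallyFiniteOrderBot ι] (r : ι → ι → ℝ) (K : ℝ)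
    (hdiag : ∀ i, |r i i| ≤ K) (hoff : ∀ i j, i < j → |r i j + r j i| ≤ K) :
    |∑ i, ∑ j, r i j| ≤ Fintype.card ι ^ 2 * K := by
  have hrow (i : ι) : |r i i + ∑ j ∈ Ioi i, (r i j + r j i)| ≤ Fintype.card ι * K := by
    have hK : 0 ≤ K := (abs_nonneg _).trans (hdiag i)
    calc |r i i + ∑ j ∈ Ioi i, (r i j + r j i)|
        ≤ |r i i| + ∑ j ∈ Ioi i, |r i j + r j i| :=
          (abs_add_le _ _).trans (add_le_add_right (abs_sum_le_sum_abs _ _) _)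
      _ ≤ K + ∑ _j ∈ Ioi i, K := by
          gcongr with j hj
          exacts [hdiag i, hoff i j (mem_Ioi.mp hj)]
      _ = #(Ici i) * K := by
          rw [sum_const, nsmul_eq_mul, Ici_eq_cons_Ioi, card_cons]; push_cast; ring
      _ ≤ Fintype.card ι * K := by gcongr; exact card_le_univ _
  calc |∑ i, ∑ j, r i j| = |∑ i, (r i i + ∑ j ∈ Ioi i, (r i j + r j i))| := by
        rw [sum_sum_eq_sum_add_sum_Ioi]
    _ ≤ ∑ _i : ι, Fintype.card ι * K :=
        (abs_sum_le_sum_abs _ _).trans (sum_le_sum fun i _ ↦ hrow i)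
    _ = Fintype.card ι ^ 2 * K := by rw [sum_const, card_univ, nsmul_eq_mul]; ring

theorem le_sqrt_sum_sq {ι : Type*} {s : Finset ι} {i : ι} (hi : i ∈ s) (x : ι → ℝ) :
    x i ≤ Real.sqrt (∑ j ∈ s, x j ^ 2) :=
  Real.le_sqrt_of_sq_le (single_le_sum (fun j _ ↦ sq_nonneg (x j)) hi)

theorem stmt10_general {m : ℕ}
    (H V : Fin m → Type*)
    [∀ i, NormedAddCommGroup (H i)] [∀ i, InnerProductSpace ℂ (H i)]
    [∀ i, NormedAddCommGroup (V i)] [∀ i, InnerProductSpace ℂ (V i)]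
    (J : ∀ i, V i →L[ℂ] H i)
    (a : ∀ i j, V j →ₗ[ℂ] V i →ₛₗ[starRingEnd ℂ] ℂ)
    (M : ℝ) (hM : 0 ≤ M)
    (hdiag : ∀ i (f : V i), |(a i i f f).im| ≤ M * ‖f‖ * ‖J i f‖)
    (hoff :
      (∀ i j : Fin m, i < j → ∀ (f : V j) (g : V i),
        |(a i j f g + a j i g f).im| ≤ M * ‖f‖ * ‖J i g‖) ∨
      (∀ i j : Fin m, i < j → ∀ (f : V j) (g : V i),
        |(a i j f g + a j i g f).im| ≤ M * ‖J j f‖ * ‖g‖)) :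
    ∃ Mt ≥ (0 : ℝ), ∀ f : ∀ i, V i,
      |(∑ i, ∑ j, a i j (f j) (f i)).im| ≤
        Mt * Real.sqrt (∑ i, ‖f i‖ ^ 2) * Real.sqrt (∑ i, ‖J i (f i)‖ ^ 2) := by
  refine ⟨m ^ 2 * M, by positivity, fun f ↦ ?_⟩
  set X := Real.sqrt (∑ i, ‖f i‖ ^ 2)
  set Y := Real.sqrt (∑ i, ‖J i (f i)‖ ^ 2)
  have hXY (i j : Fin m) : M * ‖f i‖ * ‖J j (f j)‖ ≤ M * X * Y := by
    gcongr
    exacts [le_sqrt_sum_sq (mem_univ i) (‖f ·‖), le_sqrt_sum_sq (mem_univ j) (fun k ↦ ‖J k (f k)‖)]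
  have hoff' (i j : Fin m) (hij : i < j) :
      |(a i j (f j) (f i)).im + (a j i (f i) (f j)).im| ≤ M * X * Y := by
    rw [← Complex.add_im]
    rcases hoff with hV | hH
    · exact (hV i j hij (f j) (f i)).trans (hXY j i)
    · exact (hH i j hij (f j) (f i)).trans ((mul_right_comm M _ _).trans_le (hXY i j))
  simp only [Complex.im_sum]
  calc _ ≤ Fintype.card (Fin m) ^ 2 * (M * X * Y) :=
        abs_sum_sum_le_card_sq_mul _ _ (fun i ↦ (hdiag i (f i)).trans (hXY i i)) hoff'
    _ = m ^ 2 * M * X * Y := by rw [Fintype.card_fin]; ring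

/-- Crouzeix–Haase-type estimate on the numerical range. If the imaginary
parts of the diagonal entries satisfy `|Im a i i (f,f)| ≤ M ‖f‖_{V i} ‖f‖_{H i}`, and for all
`i < j` the symmetrized off-diagonal imaginary parts satisfy one of the two mixed estimates,
then `|Im 𝔞(𝔣,𝔣)| ≤ M̃ ‖𝔣‖_𝒱 ‖𝔣‖_ℋ` for some `M̃ ≥ 0`. -/
theorem stmt10 {m : ℕ} (hm : 1 ≤ m)
    (H V : Fin m → Type*)
    [∀ i, NormedAddCommGroup (H i)] [∀ i, InnerProductSpace ℂ (H i)] [∀ i, CompleteSpace (H i)]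
    [∀ i, NormedAddCommGroup (V i)] [∀ i, InnerProductSpace ℂ (V i)] [∀ i, CompleteSpace (V i)]
    (J : ∀ i, V i →L[ℂ] H i)
    (hJinj : ∀ i, Function.Injective (J i)) (hJdense : ∀ i, DenseRange (J i))
    (a : ∀ i j, V j →ₗ[ℂ] V i →ₛₗ[starRingEnd ℂ] ℂ)
    (M : ℝ) (hM : 0 ≤ M)
    (hdiag : ∀ i (f : V i), |(a i i f f).im| ≤ M * ‖f‖ * ‖J i f‖)
    (hoff :
      (∀ i j : Fin m, i < j → ∀ (f : V j) (g : V i),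
        |(a i j f g + a j i g f).im| ≤ M * ‖f‖ * ‖J i g‖) ∨
      (∀ i j : Fin m, i < j → ∀ (f : V j) (g : V i),
        |(a i j f g + a j i g f).im| ≤ M * ‖J j f‖ * ‖g‖)) :
    ∃ Mt ≥ (0 : ℝ), ∀ f : ∀ i, V i,
      |(∑ i, ∑ j, a i j (f j) (f i)).im| ≤
        Mt * Real.sqrt (∑ i, ‖f i‖ ^ 2) * Real.sqrt (∑ i, ‖J i (f i)‖ ^ 2) :=
  stmt10_general H V J a M hM hdiag hoff
end

section
/- Let K ∈ M_m(ℂ) satisfy K² = K and K* = K, and let v_1,…,v_m be an orthonormal basis of ℂ^m, v_i = (v_{i1},…,v_{im}), with Kv_ℓ = v_ℓ for ℓ = 1,…,r and Kv_k = 0 for k = r+1,…,m. Define 𝒫 : ℋ → ℋ by (𝒫𝔣)_i = Σ_{j=1}^m K_{ij} f_j. Then the following are equivalent: (a) 𝔞(𝔤,𝔥) = 0 for all 𝔤 ∈ ker(I − 𝒫) ∩ 𝒱 and all 𝔥 ∈ ker 𝒫 ∩ 𝒱; (b) for all g_1,…,g_m ∈ V one has Σ_{i,j=1}^m Σ_{ℓ=1}^r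 Σ_{k=r+1}^m v_{ℓj} · conj(v_{ki}) · a_{ij}(g_ℓ, g_k) = 0. -/
/-!
Expand vectors of `ℋ` in the orthonormal eigenbasis `v`: with `c_i(𝔣) = ∑_s conj (v i s) f_s`
one has `f_j = ∑_i v i j • c_i(𝔣)`, and since `K` is self-adjoint, `c_i(𝒫𝔣)` is the coefficient
of `𝔣` against `K v_i`. Hence `c_k(𝔤) = 0` for `k ≥ r` when `𝒫𝔤 = 𝔤`, and `c_ℓ(𝔥) = 0` for `ℓ < r`
when `𝒫𝔥 = 0`. So the pairs in (a) are exactly `𝔤_j = ∑_{ℓ<r} v ℓ j • G_ℓ`,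
`𝔥_i = ∑_{k≥r} v k i • G_k` for one `G ∈ V^m`, and sesquilinearity turns `𝔞(𝔤, 𝔥)` into the
sum in (b).
-/

open Finset MeasureTheory

/-- A map `a : E → F → ℂ` is sesquilinear on the pair of submodules `(V, W)`:
linear in the first variable and antilinear in the second, for arguments in `V` and `W`. -/
def SesquiOnStmt14 {E F : Type*} [AddCommGroup E] [Module ℂ E] [AddCommGroup F] [Module ℂ F]
    (V : Submodule ℂ E) (W : Submodule ℂ F) (a : E → F → ℂ) : Prop :=
  (∀ f₁ ∈ V, ∀ f₂ ∈ V, ∀ g ∈ W, a (f₁ + f₂) g = a f₁ g + a f₂ g) ∧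
  (∀ (c : ℂ), ∀ f ∈ V, ∀ g ∈ W, a (c • f) g = c * a f g) ∧
  (∀ f ∈ V, ∀ g₁ ∈ W, ∀ g₂ ∈ W, a f (g₁ + g₂) = a f g₁ + a f g₂) ∧
  (∀ (c : ℂ), ∀ f ∈ V, ∀ g ∈ W, a f (c • g) = (starRingEnd ℂ) c * a f g)

open scoped Matrix

namespace SesquiOnStmt14

variable {E F : Type*} [AddCommGroup E] [Module ℂ E] [AddCommGroup F] [Module ℂ F]
  {V : Submodule ℂ E} {W : Submodule ℂ F} {a : E → F → ℂ}

theorem map_sum_left (h : SesquiOnStmt14 V W a) {ι : Type*} {f : ι → E} (hf : ∀ i, f i ∈ V)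
    {g : F} (hg : g ∈ W) (S : Finset ι) : a (∑ i ∈ S, f i) g = ∑ i ∈ S, a (f i) g := by
  induction S using Finset.cons_induction with
  | empty => simpa using h.2.1 0 0 V.zero_mem g hg
  | cons i S _ ih => rw [sum_cons, sum_cons, h.1 _ (hf i) _ (sum_mem fun j _ => hf j) g hg, ih]

theorem map_sum_right (h : SesquiOnStmt14 V W a) {ι : Type*} {g : ι → F} (hg : ∀ i, g i ∈ W)
    {f : E} (hf : f ∈ V) (S : Finset ι) : a f (∑ i ∈ S, g i) = ∑ i ∈ S, a f (g i) := by
  induction S using Finset.cons_induction with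
  | empty => simpa using h.2.2.2 0 f hf 0 W.zero_mem
  | cons i S _ ih => rw [sum_cons, sum_cons, h.2.2.1 f hf _ (hg i) _ (sum_mem fun j _ => hg j), ih]

theorem map_sum_smul_sum_smul (h : SesquiOnStmt14 V W a) {ι κ : Type*} {f : ι → E} {g : κ → F}
    (hf : ∀ i, f i ∈ V) (hg : ∀ k, g k ∈ W) (S : Finset ι) (T : Finset κ) (c : ι → ℂ)
    (d : κ → ℂ) :
    a (∑ ℓ ∈ S, c ℓ • f ℓ) (∑ k ∈ T, d k • g k)
      = ∑ ℓ ∈ S, ∑ k ∈ T, c ℓ * starRingEnd ℂ (d k) * a (f ℓ) (g k) := by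
  have hdg : ∑ k ∈ T, d k • g k ∈ W := sum_mem fun k _ => W.smul_mem _ (hg k)
  rw [h.map_sum_left (fun ℓ => V.smul_mem _ (hf ℓ)) hdg]
  refine sum_congr rfl fun ℓ _ => ?_
  rw [h.2.1 _ _ (hf ℓ) _ hdg, h.map_sum_right (fun k => W.smul_mem _ (hg k)) (hf ℓ), mul_sum]
  refine sum_congr rfl fun k _ => ?_
  rw [h.2.2.2 _ _ (hf ℓ) _ (hg k), mul_assoc]

end SesquiOnStmt14

section ModuleValuedVectors

variable {ι κ M : Type*} [Fintype κ] [AddCommGroup M] [Module ℂ M]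

theorem sum_smul_sum_smul_comm (b : κ → ℂ) (w : ι → κ → ℂ) (f : ι → M) (S : Finset ι) :
    ∑ j, b j • ∑ ℓ ∈ S, w ℓ j • f ℓ = ∑ ℓ ∈ S, (b ⬝ᵥ w ℓ) • f ℓ := by
  simp only [smul_sum, smul_smul, dotProduct, sum_smul]
  exact sum_comm

theorem sum_smul_sum_smul_of_mulVec_eq_self {K : Matrix κ κ ℂ} {w : ι → κ → ℂ} {S : Finset ι}
    (hS : ∀ ℓ ∈ S, K *ᵥ w ℓ = w ℓ) (f : ι → M) (i : κ) :
    ∑ j, K i j • ∑ ℓ ∈ S, w ℓ j • f ℓ = ∑ ℓ ∈ S, w ℓ i • f ℓ := by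
  rw [sum_smul_sum_smul_comm]
  exact sum_congr rfl fun ℓ hℓ => congrArg (· • f ℓ) (congrFun (hS ℓ hℓ) i)

theorem sum_smul_sum_smul_of_mulVec_eq_zero {K : Matrix κ κ ℂ} {w : ι → κ → ℂ} {S : Finset ι}
    (hS : ∀ ℓ ∈ S, K *ᵥ w ℓ = 0) (f : ι → M) (i : κ) :
    ∑ j, K i j • ∑ ℓ ∈ S, w ℓ j • f ℓ = 0 := by
  rw [sum_smul_sum_smul_comm]
  exact sum_eq_zero fun ℓ hℓ => by rw [show K i ⬝ᵥ w ℓ = 0 from congrFun (hS ℓ hℓ) i, zero_smul]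

end ModuleValuedVectors

section Coefficients

variable {ι M : Type*} [Fintype ι] [AddCommGroup M] [Module ℂ M]

def coeff (v : ι → ι → ℂ) (f : ι → M) (i : ι) : M := ∑ s, starRingEnd ℂ (v i s) • f s

theorem coeff_mem {V : Submodule ℂ M} (v : ι → ι → ℂ) {f : ι → M} (hf : ∀ i, f i ∈ V) (i : ι) :
    coeff v f i ∈ V :=
  sum_mem fun s _ => V.smul_mem _ (hf s)

variable {v : ι → ι → ℂ} {K : Matrix ι ι ℂ}

theorem coeff_sum_smul_of_isHermitian (hK : Kᴴ = K) (f : ι → M) (i : ι) :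
    coeff v (fun s => ∑ t, K s t • f t) i = coeff (fun k => K *ᵥ v k) f i := by
  simp only [coeff]
  rw [sum_smul_sum_smul_comm]
  refine sum_congr rfl fun t _ => congrArg (· • f t) ?_
  conv_lhs => rw [← hK]
  simp [dotProduct, Matrix.mulVec, Matrix.conjTranspose_apply, mul_comm]

theorem coeff_eq_zero_of_mulVec_eq_zero (hK : Kᴴ = K) {f : ι → M}
    (hf : ∀ s, ∑ t, K s t • f t = f s) {k : ι} (hk : K *ᵥ v k = 0) : coeff v f k = 0 := by
  have hKf : (fun s => ∑ t, K s t • f t) = f := funext hf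
  rw [← hKf, coeff_sum_smul_of_isHermitian hK]
  simp [coeff, hk]

theorem coeff_eq_zero_of_mulVec_eq_self (hK : Kᴴ = K) {f : ι → M}
    (hf : ∀ s, ∑ t, K s t • f t = 0) {k : ι} (hk : K *ᵥ v k = v k) : coeff v f k = 0 := by
  have hKf : coeff (fun k => K *ᵥ v k) f k = coeff v f k := by simp only [coeff, hk]
  rw [← hKf, ← coeff_sum_smul_of_isHermitian hK]
  simp [coeff, hf]

variable [DecidableEq ι]

/-- A one-sided inverse of a square matrix is two-sided: orthonormal rows are orthonormal
columns. -/
theorem sum_mul_conj_eq_ite_of_orthonormal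
    (hv : ∀ i j, ∑ s, starRingEnd ℂ (v i s) * v j s = if i = j then 1 else 0) (j s : ι) :
    ∑ i, v i j * starRingEnd ℂ (v i s) = if j = s then 1 else 0 := by
  have hA : Matrix.of v * (Matrix.of v)ᴴ = 1 := by
    ext i j
    simpa [Matrix.mul_apply, Matrix.one_apply, mul_comm, eq_comm] using hv j i
  have hA' := congrArg (fun B => B s j) (mul_eq_one_comm.mp hA)
  simpa [Matrix.mul_apply, Matrix.one_apply, mul_comm, eq_comm] using hA'

theorem sum_smul_coeff
    (hv : ∀ i j, ∑ s, starRingEnd ℂ (v i s) * v j s = if i = j then 1 else 0) (f : ι → M)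
    (j : ι) : ∑ i, v i j • coeff v f i = f j := by
  simp only [coeff]
  rw [sum_smul_sum_smul_comm]
  simp [dotProduct, sum_mul_conj_eq_ite_of_orthonormal hv]

theorem eq_sum_smul_coeff_of_coeff_eq_zero
    (hv : ∀ i j, ∑ s, starRingEnd ℂ (v i s) * v j s = if i = j then 1 else 0) {f : ι → M}
    {S : Finset ι} (hS : ∀ k ∉ S, coeff v f k = 0) (j : ι) :
    f j = ∑ k ∈ S, v k j • coeff v f k := by
  rw [sum_subset (subset_univ S) fun k _ hk => by rw [hS k hk, smul_zero], sum_smul_coeff hv]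

end Coefficients

section Decomposition

variable {ι M : Type*} [Fintype ι] [AddCommGroup M] [Module ℂ M]
  {V : Submodule ℂ M}

theorem sum_sum_map_sum_smul_sum_smul {a : ι → ι → M → M → ℂ}
    (ha : ∀ i j, SesquiOnStmt14 V V (a i j)) {f : ι → M} (hf : ∀ i, f i ∈ V)
    (v : ι → ι → ℂ) (S T : Finset ι) :
    ∑ i, ∑ j, a i j (∑ ℓ ∈ S, v ℓ j • f ℓ) (∑ k ∈ T, v k i • f k)
      = ∑ i, ∑ j, ∑ ℓ ∈ S, ∑ k ∈ T, v ℓ j * starRingEnd ℂ (v k i) * a i j (f ℓ) (f k) :=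
  sum_congr rfl fun i _ => sum_congr rfl fun j _ =>
    (ha i j).map_sum_smul_sum_smul hf hf S T _ _

theorem exists_coeffs_of_fixed_of_ker [DecidableEq ι] {v : ι → ι → ℂ}
    (hv : ∀ i j, ∑ s, starRingEnd ℂ (v i s) * v j s = if i = j then 1 else 0)
    {K : Matrix ι ι ℂ} (hK : Kᴴ = K) {S : Finset ι} (hS : ∀ ℓ ∈ S, K *ᵥ v ℓ = v ℓ)
    (hSc : ∀ k ∈ Sᶜ, K *ᵥ v k = 0) {g h : ι → M} (hgV : ∀ i, g i ∈ V) (hhV : ∀ i, h i ∈ V)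
    (hg : ∀ i, ∑ j, K i j • g j = g i) (hh : ∀ i, ∑ j, K i j • h j = 0) :
    ∃ G : ι → M, (∀ i, G i ∈ V) ∧ (g = fun j => ∑ ℓ ∈ S, v ℓ j • G ℓ) ∧
      h = fun i => ∑ k ∈ Sᶜ, v k i • G k := by
  refine ⟨S.piecewise (coeff v g) (coeff v h), fun i => ?_, funext fun j => ?_,
    funext fun i => ?_⟩
  · by_cases hi : i ∈ S <;> simp [hi, coeff_mem v hgV, coeff_mem v hhV]
  · rw [eq_sum_smul_coeff_of_coeff_eq_zero hv
      (fun k hk => coeff_eq_zero_of_mulVec_eq_zero hK hg (hSc k (mem_compl.2 hk))) j]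
    exact sum_congr rfl fun ℓ hℓ => by rw [piecewise_eq_of_mem _ _ _ hℓ]
  · rw [eq_sum_smul_coeff_of_coeff_eq_zero hv
      (fun k hk => coeff_eq_zero_of_mulVec_eq_self hK hh (hS k (notMem_compl.1 hk))) i]
    exact sum_congr rfl fun k hk => by rw [piecewise_eq_of_notMem _ _ _ (mem_compl.1 hk)]

end Decomposition

theorem stmt14_general {m r : ℕ}
    {X : Type*} [MeasurableSpace X] (μ : Measure X)
    (V : Submodule ℂ (Lp ℂ 2 μ))
    (a : Fin m → Fin m → Lp ℂ 2 μ → Lp ℂ 2 μ → ℂ)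
    (hses : ∀ i j, SesquiOnStmt14 V V (a i j))
    (K : Matrix (Fin m) (Fin m) ℂ) (hKH : K.conjTranspose = K)
    (v : Fin m → Fin m → ℂ)
    (hortho : ∀ i j : Fin m,
      (∑ s, (starRingEnd ℂ) (v i s) * v j s) = if i = j then 1 else 0)
    (hv1 : ∀ ℓ : Fin m, (ℓ : ℕ) < r → K.mulVec (v ℓ) = v ℓ)
    (hv0 : ∀ k : Fin m, r ≤ (k : ℕ) → K.mulVec (v k) = 0) :
    (∀ g h : Fin m → Lp ℂ 2 μ, (∀ i, g i ∈ V) → (∀ i, h i ∈ V) →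
        (∀ i, (∑ j, K i j • g j) = g i) → (∀ i, (∑ j, K i j • h j) = 0) →
        (∑ i, ∑ j, a i j (g j) (h i)) = 0) ↔
      (∀ g : Fin m → Lp ℂ 2 μ, (∀ i, g i ∈ V) →
        (∑ i, ∑ j, ∑ ℓ ∈ Finset.univ.filter (fun ℓ : Fin m => (ℓ : ℕ) < r),
          ∑ k ∈ Finset.univ.filter (fun k : Fin m => r ≤ (k : ℕ)),
            v ℓ j * (starRingEnd ℂ) (v k i) * a i j (g ℓ) (g k)) = 0) := by
  set S := Finset.univ.filter (fun ℓ : Fin m => (ℓ : ℕ) < r)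
  have hSc : Finset.univ.filter (fun k : Fin m => r ≤ (k : ℕ)) = Sᶜ := by ext; simp [S]
  have hS1 : ∀ ℓ ∈ S, K.mulVec (v ℓ) = v ℓ := by simpa [S] using hv1
  have hS0 : ∀ k ∈ Sᶜ, K.mulVec (v k) = 0 := by simpa [S] using hv0
  rw [hSc]
  constructor
  · intro hyp g hg
    rw [← sum_sum_map_sum_smul_sum_smul hses hg]
    exact hyp _ _ (fun j => sum_mem fun ℓ _ => V.smul_mem _ (hg ℓ))
      (fun i => sum_mem fun k _ => V.smul_mem _ (hg k))
      (sum_smul_sum_smul_of_mulVec_eq_self hS1 g) (sum_smul_sum_smul_of_mulVec_eq_zero hS0 g)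
  · intro hyp g h hgV hhV hg hh
    obtain ⟨G, hGV, rfl, rfl⟩ := exists_coeffs_of_fixed_of_ker hortho hKH hS1 hS0 hgV hhV hg hh
    rw [sum_sum_map_sum_smul_sum_smul hses hGV]
    exact hyp G hGV

/-- Let `K` be an orthogonal projection matrix on `ℂ^m` with orthonormal
eigenbasis `v 0, …, v (m-1)`, the first `r` eigenvectors for eigenvalue `1` and the rest for
eigenvalue `0`, and let `𝒫` act on `ℋ = (L²)^m` by `(𝒫𝔣)_i = ∑_j K i j • f j`. Then
`𝔞(𝔤,𝔥) = 0` for all `𝔤 ∈ ker(I - 𝒫) ∩ 𝒱`, `𝔥 ∈ ker 𝒫 ∩ 𝒱` iff for all `g₁,…,g_m ∈ V`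
one has `∑_{i,j} ∑_{ℓ<r} ∑_{k≥r} v ℓ j * conj (v k i) * a i j (g ℓ) (g k) = 0`. -/
theorem stmt14 {m r : ℕ} (hm : 1 ≤ m) (hr1 : 1 ≤ r) (hrm : r ≤ m - 1)
    {X : Type*} [MeasurableSpace X] (μ : Measure X) [SigmaFinite μ]
    (V : Submodule ℂ (Lp ℂ 2 μ))
    (a : Fin m → Fin m → Lp ℂ 2 μ → Lp ℂ 2 μ → ℂ)
    (hses : ∀ i j, SesquiOnStmt14 V V (a i j))
    (K : Matrix (Fin m) (Fin m) ℂ) (hK2 : K * K = K) (hKH : K.conjTranspose = K)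
    (v : Fin m → Fin m → ℂ)
    (hortho : ∀ i j : Fin m,
      (∑ s, (starRingEnd ℂ) (v i s) * v j s) = if i = j then 1 else 0)
    (hv1 : ∀ ℓ : Fin m, (ℓ : ℕ) < r → K.mulVec (v ℓ) = v ℓ)
    (hv0 : ∀ k : Fin m, r ≤ (k : ℕ) → K.mulVec (v k) = 0) :
    (∀ g h : Fin m → Lp ℂ 2 μ, (∀ i, g i ∈ V) → (∀ i, h i ∈ V) →
        (∀ i, (∑ j, K i j • g j) = g i) → (∀ i, (∑ j, K i j • h j) = 0) →
        (∑ i, ∑ j, a i j (g j) (h i)) = 0) ↔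
      (∀ g : Fin m → Lp ℂ 2 μ, (∀ i, g i ∈ V) →
        (∑ i, ∑ j, ∑ ℓ ∈ Finset.univ.filter (fun ℓ : Fin m => (ℓ : ℕ) < r),
          ∑ k ∈ Finset.univ.filter (fun k : Fin m => r ≤ (k : ℕ)),
            v ℓ j * (starRingEnd ℂ) (v k i) * a i j (g ℓ) (g k)) = 0) :=
  stmt14_general μ V a hses K hKH v hortho hv1 hv0
end

section
/- The following are equivalent: (A) for every 𝔣 ∈ 𝒱 one has Re 𝔣 ∈ 𝒱 (coordinatewise) and 𝔞(Re 𝔣, Im 𝔣) ∈ ℝ; (B) for every i = 1,…,m: f ∈ V_i implies Re f ∈ V_i, and a_{ii}(Re f, Im f) ∈ ℝ for all f ∈ V_i; and for all i ≠ j: a_{ij}(f,g) ∈ ℝ for all f ∈ V_j and g ∈ V_i that are real-valued almost everywhere. -/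
/-!
(A) ⇒ (B): test (A) on vectors supported in one or two coordinates. For `𝔣 = f eᵢ` only the
term `a i i` survives. For real-valued `f ∈ V j`, `g ∈ V i` with `i ≠ j`, the vector
`𝔣 = f eⱼ + I • g eᵢ` has `Re 𝔣 = f eⱼ` and `Im 𝔣 = g eᵢ`, so `𝔞(Re 𝔣, Im 𝔣) = a i j f g`.
(B) ⇒ (A): `Re 𝔣` and `Im 𝔣` are real-valued, so each term of the double sum is real.
-/

open Finset MeasureTheory

/-- A map `a : E → F → ℂ` is sesquilinear on the pair of submodules `(V, W)`:
linear in the first variable and antilinear in the second, for arguments in `V` and `W`. -/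
def SesquiOnStmt17 {E F : Type*} [AddCommGroup E] [Module ℂ E] [AddCommGroup F] [Module ℂ F]
    (V : Submodule ℂ E) (W : Submodule ℂ F) (a : E → F → ℂ) : Prop :=
  (∀ f₁ ∈ V, ∀ f₂ ∈ V, ∀ g ∈ W, a (f₁ + f₂) g = a f₁ g + a f₂ g) ∧
  (∀ (c : ℂ), ∀ f ∈ V, ∀ g ∈ W, a (c • f) g = c * a f g) ∧
  (∀ f ∈ V, ∀ g₁ ∈ W, ∀ g₂ ∈ W, a f (g₁ + g₂) = a f g₁ + a f g₂) ∧
  (∀ (c : ℂ), ∀ f ∈ V, ∀ g ∈ W, a f (c • g) = (starRingEnd ℂ) c * a f g)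

namespace SesquiOnStmt17

variable {E F : Type*} [AddCommGroup E] [Module ℂ E] [AddCommGroup F] [Module ℂ F]
  {V : Submodule ℂ E} {W : Submodule ℂ F} {a : E → F → ℂ}

theorem map_zero_left (ha : SesquiOnStmt17 V W a) {g : F} (hg : g ∈ W) : a 0 g = 0 := by
  simpa using ha.2.1 0 0 V.zero_mem g hg

theorem map_zero_right (ha : SesquiOnStmt17 V W a) {f : E} (hf : f ∈ V) : a f 0 = 0 := by
  simpa using ha.2.2.2 0 f hf 0 W.zero_mem

end SesquiOnStmt17

section Single

variable {ι : Type*} [DecidableEq ι] {E : ι → Type*} [∀ i, AddCommGroup (E i)]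

theorem Submodule.single_apply_mem {R : Type*} [Semiring R] [∀ i, Module R (E i)]
    {V : ∀ i, Submodule R (E i)} {j : ι} {f : E j} (hf : f ∈ V j) (k : ι) :
    Pi.single j f k ∈ V k := by
  rcases eq_or_ne k j with rfl | hk
  · simpa using hf
  · simp [hk]

theorem SesquiOnStmt17.sum_sum_single_single [Fintype ι] [∀ i, Module ℂ (E i)]
    {V : ∀ i, Submodule ℂ (E i)} {a : ∀ i j, E j → E i → ℂ}
    (ha : ∀ i j, SesquiOnStmt17 (V j) (V i) (a i j)) {i j : ι} {f : E j} {g : E i}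
    (hf : f ∈ V j) (hg : g ∈ V i) :
    ∑ k, ∑ l, a k l (Pi.single j f l) (Pi.single i g k) = a i j f g := by
  rw [Finset.sum_eq_single_of_mem i (mem_univ i), Finset.sum_eq_single_of_mem j (mem_univ j)]
  · simp
  · intro l _ hl
    rw [Pi.single_eq_of_ne hl, Pi.single_eq_same]
    exact (ha i l).map_zero_left hg
  · intro k _ hk
    refine Finset.sum_eq_zero fun l _ => ?_
    rw [Pi.single_eq_of_ne hk]
    exact (ha k l).map_zero_right (Submodule.single_apply_mem hf l)

end Single

namespace MeasureTheory.Lp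

variable {α : Type*} [MeasurableSpace α] {μ : Measure α} {p : ENNReal}

def IsRePart (u f : Lp ℂ p μ) : Prop := ⇑u =ᵐ[μ] fun x => ((f x).re : ℂ)

def IsImPart (w f : Lp ℂ p μ) : Prop := ⇑w =ᵐ[μ] fun x => ((f x).im : ℂ)

def IsRealValued (f : Lp ℂ p μ) : Prop := IsRePart f f

theorem isRealValued_zero : IsRealValued (0 : Lp ℂ p μ) := by
  filter_upwards [coeFn_zero ℂ p μ] with x hx
  rw [hx]
  simp

theorem isRealValued_of_ae_eq_ofReal {u : Lp ℂ p μ} {φ : α → ℝ}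
    (h : ⇑u =ᵐ[μ] fun x => (φ x : ℂ)) : IsRealValued u := by
  filter_upwards [h] with x hx
  simp [hx]

theorem IsRePart.isRealValued {u f : Lp ℂ p μ} (h : IsRePart u f) : IsRealValued u :=
  isRealValued_of_ae_eq_ofReal h

theorem IsImPart.isRealValued {w f : Lp ℂ p μ} (h : IsImPart w f) : IsRealValued w :=
  isRealValued_of_ae_eq_ofReal h

theorem coeFn_add_I_smul (f g : Lp ℂ p μ) :
    ⇑(f + Complex.I • g) =ᵐ[μ] fun x => f x + Complex.I * g x := by
  filter_upwards [coeFn_add f (Complex.I • g), coeFn_smul Complex.I g] with x hadd hsmul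
  rw [hadd, Pi.add_apply, hsmul, Pi.smul_apply, smul_eq_mul]

theorem IsRePart.eq_of_add_I_smul {u f g : Lp ℂ p μ} (hf : IsRealValued f)
    (hg : IsRealValued g) (hu : IsRePart u (f + Complex.I • g)) : u = f := by
  refine Lp.ext ?_
  filter_upwards [hu, hf, hg, coeFn_add_I_smul f g] with x hux hfx hgx hx
  rw [hux, hx, hfx, hgx]
  simp

theorem IsImPart.eq_of_add_I_smul {w f g : Lp ℂ p μ} (hf : IsRealValued f)
    (hg : IsRealValued g) (hw : IsImPart w (f + Complex.I • g)) : w = g := by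
  refine Lp.ext ?_
  filter_upwards [hw, hf, hg, coeFn_add_I_smul f g] with x hwx hfx hgx hx
  rw [hwx, hx, hfx, hgx]
  simp

theorem IsRePart.eq_zero_of_zero {u : Lp ℂ p μ} (hu : IsRePart u 0) : u = 0 :=
  IsRePart.eq_of_add_I_smul isRealValued_zero isRealValued_zero (by simpa using hu)

theorem IsImPart.eq_zero_of_zero {w : Lp ℂ p μ} (hw : IsImPart w 0) : w = 0 :=
  IsImPart.eq_of_add_I_smul isRealValued_zero isRealValued_zero (by simpa using hw)

end MeasureTheory.Lp

section Family

open Lp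

variable {ι : Type*} [DecidableEq ι] {X : ι → Type*} [∀ i, MeasurableSpace (X i)]
  {μ : ∀ i, Measure (X i)} {p : ENNReal}

theorem isRealValued_single {j : ι} {f : Lp ℂ p (μ j)} (hf : IsRealValued f) (k : ι) :
    IsRealValued (Pi.single (M := fun k => Lp ℂ p (μ k)) j f k) := by
  rcases eq_or_ne k j with rfl | hk
  · simpa using hf
  · simpa [hk] using isRealValued_zero

theorem eq_single_of_isRePart_single {i : ι} {f : Lp ℂ p (μ i)} {u : ∀ k, Lp ℂ p (μ k)}
    (hu : ∀ k, IsRePart (u k) (Pi.single (M := fun k => Lp ℂ p (μ k)) i f k)) :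
    u = Pi.single i (u i) := by
  funext k
  rcases eq_or_ne k i with rfl | hk
  · simp
  · simpa [hk] using (show IsRePart (u k) 0 by simpa [hk] using hu k).eq_zero_of_zero

theorem eq_single_of_isImPart_single {i : ι} {f : Lp ℂ p (μ i)} {w : ∀ k, Lp ℂ p (μ k)}
    (hw : ∀ k, IsImPart (w k) (Pi.single (M := fun k => Lp ℂ p (μ k)) i f k)) :
    w = Pi.single i (w i) := by
  funext k
  rcases eq_or_ne k i with rfl | hk
  · simp
  · simpa [hk] using (show IsImPart (w k) 0 by simpa [hk] using hw k).eq_zero_of_zero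

end Family

theorem stmt17_general {m : ℕ}
    {X : Fin m → Type*} [∀ i, MeasurableSpace (X i)]
    (μ : ∀ i, Measure (X i))
    (V : ∀ i, Submodule ℂ (Lp ℂ 2 (μ i)))
    (a : ∀ i j : Fin m, Lp ℂ 2 (μ j) → Lp ℂ 2 (μ i) → ℂ)
    (hses : ∀ i j, SesquiOnStmt17 (V j) (V i) (a i j)) :
    (∀ f : ∀ i, Lp ℂ 2 (μ i), (∀ i, f i ∈ V i) →
        ∃ u w : ∀ i, Lp ℂ 2 (μ i),
          (∀ i, u i ∈ V i) ∧ (∀ i, w i ∈ V i) ∧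
          (∀ i, ⇑(u i) =ᵐ[μ i] fun x => (((f i : X i → ℂ) x).re : ℂ)) ∧
          (∀ i, ⇑(w i) =ᵐ[μ i] fun x => (((f i : X i → ℂ) x).im : ℂ)) ∧
          (∑ i, ∑ j, a i j (u j) (w i)).im = 0) ↔
      ((∀ i, ∀ f ∈ V i,
          ∃ u w : Lp ℂ 2 (μ i), u ∈ V i ∧ w ∈ V i ∧
            (⇑u =ᵐ[μ i] fun x => (((f : X i → ℂ) x).re : ℂ)) ∧
            (⇑w =ᵐ[μ i] fun x => (((f : X i → ℂ) x).im : ℂ)) ∧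
            (a i i u w).im = 0) ∧
        (∀ i j, i ≠ j → ∀ f ∈ V j, ∀ g ∈ V i,
          (⇑f =ᵐ[μ j] fun x => (((f : X j → ℂ) x).re : ℂ)) →
          (⇑g =ᵐ[μ i] fun x => (((g : X i → ℂ) x).re : ℂ)) →
          (a i j f g).im = 0)) := by
  refine ⟨fun hA => ⟨fun i f hf => ?_, fun i j _ f hf g hg hf_real hg_real => ?_⟩, ?_⟩
  · obtain ⟨u, w, hu, hw, hre, him, hsum⟩ := hA (Pi.single i f) (Submodule.single_apply_mem hf)
    rw [eq_single_of_isRePart_single hre, eq_single_of_isImPart_single him,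
      SesquiOnStmt17.sum_sum_single_single hses (hu i) (hw i)] at hsum
    exact ⟨u i, w i, hu i, hw i, by simpa using hre i, by simpa using him i, hsum⟩
  · have hF (k : Fin m) : (Pi.single (M := fun k => Lp ℂ 2 (μ k)) j f +
        Complex.I • Pi.single (M := fun k => Lp ℂ 2 (μ k)) i g) k ∈ V k :=
      add_mem (Submodule.single_apply_mem hf k)
        (Submodule.smul_mem _ Complex.I (Submodule.single_apply_mem hg k))
    obtain ⟨u, w, -, -, hre, him, hsum⟩ := hA _ hF
    have hu : u = Pi.single j f := funext fun k => Lp.IsRePart.eq_of_add_I_smul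
      (isRealValued_single hf_real k) (isRealValued_single hg_real k) (hre k)
    have hw : w = Pi.single i g := funext fun k => Lp.IsImPart.eq_of_add_I_smul
      (isRealValued_single hf_real k) (isRealValued_single hg_real k) (him k)
    rwa [hu, hw, SesquiOnStmt17.sum_sum_single_single hses hf hg] at hsum
  · rintro ⟨hdiag, hoff⟩ f hf
    choose u w hu hw hre him hdiag_real using fun i => hdiag i (f i) (hf i)
    refine ⟨u, w, hu, hw, hre, him, ?_⟩
    simp only [Complex.im_sum]
    refine Finset.sum_eq_zero fun i _ => Finset.sum_eq_zero fun j _ => ?_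
    rcases eq_or_ne i j with rfl | hij
    · exact hdiag_real i
    · exact hoff i j hij _ (hu j) _ (hw i) (Lp.IsRePart.isRealValued (hre j))
        (Lp.IsImPart.isRealValued (him i))

/-- criterion for reality. The following are equivalent:
(A) for every `𝔣 ∈ 𝒱`, the coordinatewise real and imaginary parts `Re 𝔣`, `Im 𝔣` (as
complex-valued `L²` elements, described by their a.e. pointwise values) belong to `𝒱` and
`𝔞(Re 𝔣, Im 𝔣) ∈ ℝ`; (B) for every `i`, `f ∈ V i` implies `Re f ∈ V i` with
`a i i (Re f, Im f) ∈ ℝ`, and for all `i ≠ j`, `a i j (f, g) ∈ ℝ` whenever `f ∈ V j` and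
`g ∈ V i` are real-valued a.e. -/
theorem stmt17 {m : ℕ} (hm : 1 ≤ m)
    {X : Fin m → Type*} [∀ i, MeasurableSpace (X i)]
    (μ : ∀ i, Measure (X i)) [∀ i, SigmaFinite (μ i)]
    (V : ∀ i, Submodule ℂ (Lp ℂ 2 (μ i)))
    (a : ∀ i j : Fin m, Lp ℂ 2 (μ j) → Lp ℂ 2 (μ i) → ℂ)
    (hses : ∀ i j, SesquiOnStmt17 (V j) (V i) (a i j)) :
    (∀ f : ∀ i, Lp ℂ 2 (μ i), (∀ i, f i ∈ V i) →
        ∃ u w : ∀ i, Lp ℂ 2 (μ i),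
          (∀ i, u i ∈ V i) ∧ (∀ i, w i ∈ V i) ∧
          (∀ i, ⇑(u i) =ᵐ[μ i] fun x => (((f i : X i → ℂ) x).re : ℂ)) ∧
          (∀ i, ⇑(w i) =ᵐ[μ i] fun x => (((f i : X i → ℂ) x).im : ℂ)) ∧
          (∑ i, ∑ j, a i j (u j) (w i)).im = 0) ↔
      ((∀ i, ∀ f ∈ V i,
          ∃ u w : Lp ℂ 2 (μ i), u ∈ V i ∧ w ∈ V i ∧
            (⇑u =ᵐ[μ i] fun x => (((f : X i → ℂ) x).re : ℂ)) ∧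
            (⇑w =ᵐ[μ i] fun x => (((f : X i → ℂ) x).im : ℂ)) ∧
            (a i i u w).im = 0) ∧
        (∀ i j, i ≠ j → ∀ f ∈ V j, ∀ g ∈ V i,
          (⇑f =ᵐ[μ j] fun x => (((f : X j → ℂ) x).re : ℂ)) →
          (⇑g =ᵐ[μ i] fun x => (((g : X i → ℂ) x).re : ℂ)) →
          (a i j f g).im = 0)) :=
  stmt17_general μ V a hses
end

section
/- The following are equivalent: (A) for every 𝔣 ∈ 𝒱 one has (Re 𝔣)⁺ ∈ 𝒱 (coordinatewise) and 𝔞((Re 𝔣)⁺, (Re 𝔣)⁻) is a real number ≤ 0; (B) for every i = 1,…,m: f ∈ V_i implies (Re f)⁺ ∈ V_i, and a_{ii}((Re f)⁺, (Re f)⁻) is real and ≤ 0 for all f ∈ V_i; and for all i ≠ j: a_{ij}(f,g) is real and ≤ 0 for all f ∈ V_j and g ∈ V_i with f ≥ 0 a.e. and g ≥ 0 a.e. -/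
/-!
(A) ⇒ (B): test (A) on vectors supported in one coordinate, which gives the diagonal condition,
and on `𝔣 = f eⱼ - g eᵢ` with `f, g ≥ 0`, whose parts `(Re 𝔣)⁺ = f eⱼ` and `(Re 𝔣)⁻ = g eᵢ` make
`𝔞((Re 𝔣)⁺, (Re 𝔣)⁻) = a i j f g`. (B) ⇒ (A): the parts of any `𝔣` are nonnegative, so every
off-diagonal term of `𝔞((Re 𝔣)⁺, (Re 𝔣)⁻)` is a nonpositive real by (B), and so is every
diagonal term.
-/

open Finset MeasureTheory

/-- A map `a : E → F → ℂ` is sesquilinear on the pair of submodules `(V, W)`: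
linear in the first variable and antilinear in the second, for arguments in `V` and `W`. -/
def SesquiOnStmt18 {E F : Type*} [AddCommGroup E] [Module ℂ E] [AddCommGroup F] [Module ℂ F]
    (V : Submodule ℂ E) (W : Submodule ℂ F) (a : E → F → ℂ) : Prop :=
  (∀ f₁ ∈ V, ∀ f₂ ∈ V, ∀ g ∈ W, a (f₁ + f₂) g = a f₁ g + a f₂ g) ∧
  (∀ (c : ℂ), ∀ f ∈ V, ∀ g ∈ W, a (c • f) g = c * a f g) ∧
  (∀ f ∈ V, ∀ g₁ ∈ W, ∀ g₂ ∈ W, a f (g₁ + g₂) = a f g₁ + a f g₂) ∧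
  (∀ (c : ℂ), ∀ f ∈ V, ∀ g ∈ W, a f (c • g) = (starRingEnd ℂ) c * a f g)

open scoped ENNReal ComplexOrder

namespace SesquiOnStmt18

variable {E F : Type*} [AddCommGroup E] [Module ℂ E] [AddCommGroup F] [Module ℂ F]
  {V : Submodule ℂ E} {W : Submodule ℂ F} {a : E → F → ℂ}

lemma apply_zero_left (h : SesquiOnStmt18 V W a) {g : F} (hg : g ∈ W) : a 0 g = 0 := by
  simpa using h.2.1 0 0 V.zero_mem g hg

lemma apply_zero_right (h : SesquiOnStmt18 V W a) {f : E} (hf : f ∈ V) : a f 0 = 0 := by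
  simpa using h.2.2.2 0 f hf 0 W.zero_mem

end SesquiOnStmt18

lemma Pi.single_mem_submodule {ι R : Type*} [DecidableEq ι] [Semiring R] {M : ι → Type*}
    [∀ i, AddCommMonoid (M i)] [∀ i, Module R (M i)] {V : ∀ i, Submodule R (M i)} {i : ι}
    {x : M i} (hx : x ∈ V i) (k : ι) : Pi.single i x k ∈ V k := by
  rcases eq_or_ne k i with rfl | hk
  · simpa using hx
  · simp [Pi.single_eq_of_ne hk]

lemma sum_sum_eq_of_support {ι : Type*} [Fintype ι] {E : ι → Type*} [∀ i, AddCommGroup (E i)]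
    [∀ i, Module ℂ (E i)] {V : ∀ i, Submodule ℂ (E i)} {a : ∀ i j, E j → E i → ℂ}
    (hses : ∀ i j, SesquiOnStmt18 (V j) (V i) (a i j)) {i₀ j₀ : ι} {u w : ∀ i, E i}
    (hu : ∀ k, u k ∈ V k) (hw : ∀ k, w k ∈ V k)
    (hu₀ : ∀ k, k ≠ j₀ → u k = 0) (hw₀ : ∀ k, k ≠ i₀ → w k = 0) :
    ∑ i, ∑ j, a i j (u j) (w i) = a i₀ j₀ (u j₀) (w i₀) := by
  rw [Fintype.sum_eq_single i₀ fun i hi => ?_, Fintype.sum_eq_single j₀ fun j hj => ?_]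
  · rw [hu₀ j hj]
    exact (hses i₀ j).apply_zero_left (hw i₀)
  · exact Finset.sum_eq_zero fun j _ => by
      rw [hw₀ i hi]
      exact (hses i j).apply_zero_right (hu j)

section PositivePart

variable {α : Type*} [MeasurableSpace α] {μ : Measure α} {p : ℝ≥0∞} {r : α → ℝ}

lemma MeasureTheory.Lp.eq_zero_of_ae_eq_max_zero {u : Lp ℂ p μ}
    (hu : ⇑u =ᵐ[μ] fun x => ((max (r x) 0 : ℝ) : ℂ)) (hr : ∀ᵐ x ∂μ, r x ≤ 0) : u = 0 :=
  Lp.ext <| by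
    filter_upwards [hu, hr, Lp.coeFn_zero ℂ p μ] with x hux hrx h0
    rw [hux, h0, max_eq_right hrx, Pi.zero_apply, Complex.ofReal_zero]

lemma MeasureTheory.Lp.eq_of_ae_eq_max_zero {u f : Lp ℂ p μ}
    (hu : ⇑u =ᵐ[μ] fun x => ((max (r x) 0 : ℝ) : ℂ))
    (hr : ∀ᵐ x ∂μ, 0 ≤ r x ∧ (r x : ℂ) = f x) : u = f :=
  Lp.ext <| by
    filter_upwards [hu, hr] with x hux ⟨hrx, hfx⟩
    rw [hux, max_eq_left hrx, hfx]

lemma MeasureTheory.Lp.ae_re_coeFn_zero : ∀ᵐ x ∂μ, ((0 : Lp ℂ p μ) x).re = 0 :=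
  (Lp.coeFn_zero ℂ p μ).mono fun x hx => by rw [hx, Pi.zero_apply, Complex.zero_re]

lemma ae_im_eq_zero_and_re_nonneg_of_ae_eq_max_zero {u : α → ℂ}
    (hu : u =ᵐ[μ] fun x => ((max (r x) 0 : ℝ) : ℂ)) :
    ∀ᵐ x ∂μ, (u x).im = 0 ∧ 0 ≤ (u x).re :=
  hu.mono fun x hx => by simp [hx]

end PositivePart

section Criterion

variable {ι : Type*} [Fintype ι] {X : ι → Type*} [∀ i, MeasurableSpace (X i)]
  {μ : ∀ i, Measure (X i)} {p : ℝ≥0∞} {V : ∀ i, Submodule ℂ (Lp ℂ p (μ i))}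
  {a : ∀ i j, Lp ℂ p (μ j) → Lp ℂ p (μ i) → ℂ}

variable (V a) in
def FormNonposOnPosNegParts : Prop :=
  ∀ f : ∀ i, Lp ℂ p (μ i), (∀ i, f i ∈ V i) →
    ∃ u w : ∀ i, Lp ℂ p (μ i),
      (∀ i, u i ∈ V i) ∧ (∀ i, w i ∈ V i) ∧
      (∀ i, ⇑(u i) =ᵐ[μ i] fun x => ((max ((f i : X i → ℂ) x).re 0 : ℝ) : ℂ)) ∧
      (∀ i, ⇑(w i) =ᵐ[μ i] fun x => ((max (-((f i : X i → ℂ) x).re) 0 : ℝ) : ℂ)) ∧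
      (∑ i, ∑ j, a i j (u j) (w i)).im = 0 ∧
      (∑ i, ∑ j, a i j (u j) (w i)).re ≤ 0

namespace FormNonposOnPosNegParts

variable (hses : ∀ i j, SesquiOnStmt18 (V j) (V i) (a i j)) (hA : FormNonposOnPosNegParts V a)
include hses hA

lemma diag (i : ι) {f : Lp ℂ p (μ i)} (hf : f ∈ V i) :
    ∃ u w : Lp ℂ p (μ i), u ∈ V i ∧ w ∈ V i ∧
      (⇑u =ᵐ[μ i] fun x => ((max ((f : X i → ℂ) x).re 0 : ℝ) : ℂ)) ∧
      (⇑w =ᵐ[μ i] fun x => ((max (-((f : X i → ℂ) x).re) 0 : ℝ) : ℂ)) ∧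
      (a i i u w).im = 0 ∧ (a i i u w).re ≤ 0 := by
  classical
  obtain ⟨u, w, hu, hw, hu_eq, hw_eq, him, hre⟩ :=
    hA (Pi.single i f) (Pi.single_mem_submodule hf)
  have hzero : ∀ k, k ≠ i → u k = 0 ∧ w k = 0 := fun k hk => by
    have hu_k := hu_eq k
    have hw_k := hw_eq k
    rw [Pi.single_eq_of_ne hk] at hu_k hw_k
    exact ⟨Lp.eq_zero_of_ae_eq_max_zero hu_k (Lp.ae_re_coeFn_zero.mono fun x hx => hx.le),
      Lp.eq_zero_of_ae_eq_max_zero hw_k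
        (Lp.ae_re_coeFn_zero.mono fun x hx => by rw [hx, neg_zero])⟩
  rw [sum_sum_eq_of_support hses hu hw (fun k hk => (hzero k hk).1)
    (fun k hk => (hzero k hk).2)] at him hre
  have hu_i := hu_eq i
  have hw_i := hw_eq i
  rw [Pi.single_eq_same] at hu_i hw_i
  exact ⟨u i, w i, hu i, hw i, hu_i, hw_i, him, hre⟩

lemma offDiag {i j : ι} (hij : i ≠ j) {f : Lp ℂ p (μ j)} {g : Lp ℂ p (μ i)}
    (hf : f ∈ V j) (hg : g ∈ V i)
    (hf₀ : ∀ᵐ x ∂(μ j), ((f : X j → ℂ) x).im = 0 ∧ 0 ≤ ((f : X j → ℂ) x).re)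
    (hg₀ : ∀ᵐ x ∂(μ i), ((g : X i → ℂ) x).im = 0 ∧ 0 ≤ ((g : X i → ℂ) x).re) :
    (a i j f g).im = 0 ∧ (a i j f g).re ≤ 0 := by
  classical
  set F : ∀ k, Lp ℂ p (μ k) := Pi.single j f - Pi.single i g with hF
  obtain ⟨u, w, hu, hw, hu_eq, hw_eq, him, hre⟩ := hA F fun k =>
    sub_mem (Pi.single_mem_submodule hf k) (Pi.single_mem_submodule hg k)
  have hFj : F j = f := by simp [hF, hij.symm]
  have hFi : F i = -g := by simp [hF, hij]
  have hF₀ : ∀ k, k ≠ i → k ≠ j → F k = 0 := fun k hki hkj => by simp [hF, hki, hkj]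
  have huj : u j = f := Lp.eq_of_ae_eq_max_zero (hFj ▸ hu_eq j)
    (hf₀.mono fun x ⟨him, hre⟩ => ⟨hre, Complex.ext rfl him.symm⟩)
  have hwi : w i = g := Lp.eq_of_ae_eq_max_zero (hFi ▸ hw_eq i) <| by
    filter_upwards [hg₀, Lp.coeFn_neg g] with x ⟨him, hre⟩ hx
    rw [hx, Pi.neg_apply, Complex.neg_re, neg_neg]
    exact ⟨hre, Complex.ext rfl him.symm⟩
  have hu₀ : ∀ k, k ≠ j → u k = 0 := by
    intro k hkj
    rcases eq_or_ne k i with rfl | hki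
    · refine Lp.eq_zero_of_ae_eq_max_zero (hFi ▸ hu_eq k) ?_
      filter_upwards [hg₀, Lp.coeFn_neg g] with x ⟨_, hre⟩ hx
      rw [hx, Pi.neg_apply, Complex.neg_re]
      exact neg_nonpos.mpr hre
    · exact Lp.eq_zero_of_ae_eq_max_zero (hF₀ k hki hkj ▸ hu_eq k)
        (Lp.ae_re_coeFn_zero.mono fun x hx => hx.le)
  have hw₀ : ∀ k, k ≠ i → w k = 0 := by
    intro k hki
    rcases eq_or_ne k j with rfl | hkj
    · exact Lp.eq_zero_of_ae_eq_max_zero (hFj ▸ hw_eq k)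
        (hf₀.mono fun x ⟨_, hre⟩ => neg_nonpos.mpr hre)
    · exact Lp.eq_zero_of_ae_eq_max_zero (hF₀ k hki hkj ▸ hw_eq k)
        (Lp.ae_re_coeFn_zero.mono fun x hx => by rw [hx, neg_zero])
  rw [sum_sum_eq_of_support hses hu hw hu₀ hw₀, huj, hwi] at him hre
  exact ⟨him, hre⟩

end FormNonposOnPosNegParts

lemma formNonposOnPosNegParts_of_diag_of_offDiag
    (hdiag : ∀ i, ∀ f ∈ V i,
      ∃ u w : Lp ℂ p (μ i), u ∈ V i ∧ w ∈ V i ∧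
        (⇑u =ᵐ[μ i] fun x => ((max ((f : X i → ℂ) x).re 0 : ℝ) : ℂ)) ∧
        (⇑w =ᵐ[μ i] fun x => ((max (-((f : X i → ℂ) x).re) 0 : ℝ) : ℂ)) ∧
        (a i i u w).im = 0 ∧ (a i i u w).re ≤ 0)
    (hoff : ∀ i j, i ≠ j → ∀ f ∈ V j, ∀ g ∈ V i,
      (∀ᵐ x ∂(μ j), ((f : X j → ℂ) x).im = 0 ∧ 0 ≤ ((f : X j → ℂ) x).re) →
      (∀ᵐ x ∂(μ i), ((g : X i → ℂ) x).im = 0 ∧ 0 ≤ ((g : X i → ℂ) x).re) →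
      (a i j f g).im = 0 ∧ (a i j f g).re ≤ 0) :
    FormNonposOnPosNegParts V a := by
  intro f hf
  choose u w hu hw hu_eq hw_eq him hre using fun i => hdiag i (f i) (hf i)
  have hterm : ∀ i j, a i j (u j) (w i) ≤ 0 := by
    intro i j
    rw [Complex.nonpos_iff]
    rcases eq_or_ne i j with rfl | hij
    · exact ⟨hre i, him i⟩
    · exact (hoff i j hij (u j) (hu j) (w i) (hw i)
        (ae_im_eq_zero_and_re_nonneg_of_ae_eq_max_zero (hu_eq j))
        (ae_im_eq_zero_and_re_nonneg_of_ae_eq_max_zero (hw_eq i))).symm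
  have hsum : ∑ i, ∑ j, a i j (u j) (w i) ≤ 0 :=
    Finset.sum_nonpos fun i _ => Finset.sum_nonpos fun j _ => hterm i j
  obtain ⟨hsum_re, hsum_im⟩ := Complex.nonpos_iff.mp hsum
  exact ⟨u, w, hu, hw, hu_eq, hw_eq, hsum_im, hsum_re⟩

end Criterion

theorem stmt18_general {m : ℕ}
    {X : Fin m → Type*} [∀ i, MeasurableSpace (X i)]
    (μ : ∀ i, Measure (X i))
    (V : ∀ i, Submodule ℂ (Lp ℂ 2 (μ i)))
    (a : ∀ i j : Fin m, Lp ℂ 2 (μ j) → Lp ℂ 2 (μ i) → ℂ)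
    (hses : ∀ i j, SesquiOnStmt18 (V j) (V i) (a i j)) :
    (∀ f : ∀ i, Lp ℂ 2 (μ i), (∀ i, f i ∈ V i) →
        ∃ u w : ∀ i, Lp ℂ 2 (μ i),
          (∀ i, u i ∈ V i) ∧ (∀ i, w i ∈ V i) ∧
          (∀ i, ⇑(u i) =ᵐ[μ i] fun x => ((max ((f i : X i → ℂ) x).re 0 : ℝ) : ℂ)) ∧
          (∀ i, ⇑(w i) =ᵐ[μ i] fun x => ((max (-((f i : X i → ℂ) x).re) 0 : ℝ) : ℂ)) ∧
          (∑ i, ∑ j, a i j (u j) (w i)).im = 0 ∧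
          (∑ i, ∑ j, a i j (u j) (w i)).re ≤ 0) ↔
      ((∀ i, ∀ f ∈ V i,
          ∃ u w : Lp ℂ 2 (μ i), u ∈ V i ∧ w ∈ V i ∧
            (⇑u =ᵐ[μ i] fun x => ((max ((f : X i → ℂ) x).re 0 : ℝ) : ℂ)) ∧
            (⇑w =ᵐ[μ i] fun x => ((max (-((f : X i → ℂ) x).re) 0 : ℝ) : ℂ)) ∧
            (a i i u w).im = 0 ∧ (a i i u w).re ≤ 0) ∧
        (∀ i j, i ≠ j → ∀ f ∈ V j, ∀ g ∈ V i,
          (∀ᵐ x ∂(μ j), ((f : X j → ℂ) x).im = 0 ∧ 0 ≤ ((f : X j → ℂ) x).re) →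
          (∀ᵐ x ∂(μ i), ((g : X i → ℂ) x).im = 0 ∧ 0 ≤ ((g : X i → ℂ) x).re) →
          (a i j f g).im = 0 ∧ (a i j f g).re ≤ 0)) :=
  ⟨fun hA => ⟨fun i _ hf => FormNonposOnPosNegParts.diag hses hA i hf,
      fun _ _ hij _ hf _ hg hf₀ hg₀ => FormNonposOnPosNegParts.offDiag hses hA hij hf hg hf₀ hg₀⟩,
    fun ⟨hdiag, hoff⟩ => formNonposOnPosNegParts_of_diag_of_offDiag hdiag hoff⟩

/-- criterion for positivity. The following are equivalent:
(A) for every `𝔣 ∈ 𝒱` the coordinatewise positive and negative parts `(Re 𝔣)⁺`, `(Re 𝔣)⁻`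
(as complex-valued `L²` elements described by their a.e. pointwise values) belong to `𝒱` and
`𝔞((Re 𝔣)⁺, (Re 𝔣)⁻)` is a real number `≤ 0`; (B) for every `i`, `f ∈ V i` implies
`(Re f)⁺ ∈ V i` with `a i i ((Re f)⁺, (Re f)⁻)` real and `≤ 0`, and for all `i ≠ j`,
`a i j (f, g)` is real and `≤ 0` whenever `f ∈ V j`, `g ∈ V i` satisfy `f ≥ 0` a.e. and
`g ≥ 0` a.e. -/
theorem stmt18 {m : ℕ} (hm : 1 ≤ m)
    {X : Fin m → Type*} [∀ i, MeasurableSpace (X i)]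
    (μ : ∀ i, Measure (X i)) [∀ i, SigmaFinite (μ i)]
    (V : ∀ i, Submodule ℂ (Lp ℂ 2 (μ i)))
    (a : ∀ i j : Fin m, Lp ℂ 2 (μ j) → Lp ℂ 2 (μ i) → ℂ)
    (hses : ∀ i j, SesquiOnStmt18 (V j) (V i) (a i j)) :
    (∀ f : ∀ i, Lp ℂ 2 (μ i), (∀ i, f i ∈ V i) →
        ∃ u w : ∀ i, Lp ℂ 2 (μ i),
          (∀ i, u i ∈ V i) ∧ (∀ i, w i ∈ V i) ∧
          (∀ i, ⇑(u i) =ᵐ[μ i] fun x => ((max ((f i : X i → ℂ) x).re 0 : ℝ) : ℂ)) ∧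
          (∀ i, ⇑(w i) =ᵐ[μ i] fun x => ((max (-((f i : X i → ℂ) x).re) 0 : ℝ) : ℂ)) ∧
          (∑ i, ∑ j, a i j (u j) (w i)).im = 0 ∧
          (∑ i, ∑ j, a i j (u j) (w i)).re ≤ 0) ↔
      ((∀ i, ∀ f ∈ V i,
          ∃ u w : Lp ℂ 2 (μ i), u ∈ V i ∧ w ∈ V i ∧
            (⇑u =ᵐ[μ i] fun x => ((max ((f : X i → ℂ) x).re 0 : ℝ) : ℂ)) ∧
            (⇑w =ᵐ[μ i] fun x => ((max (-((f : X i → ℂ) x).re) 0 : ℝ) : ℂ)) ∧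
            (a i i u w).im = 0 ∧ (a i i u w).re ≤ 0) ∧
        (∀ i j, i ≠ j → ∀ f ∈ V j, ∀ g ∈ V i,
          (∀ᵐ x ∂(μ j), ((f : X j → ℂ) x).im = 0 ∧ 0 ≤ ((f : X j → ℂ) x).re) →
          (∀ᵐ x ∂(μ i), ((g : X i → ℂ) x).im = 0 ∧ 0 ≤ ((g : X i → ℂ) x).re) →
          (a i j f g).im = 0 ∧ (a i j f g).re ≤ 0)) :=
  stmt18_general μ V a hses
end

section
/- Assume 𝔞 is accretive (Re 𝔞(𝔣,𝔣) ≥ 0 for all 𝔣 ∈ 𝒱). Then the following are equivalent: (A) for every 𝔣 ∈ 𝒱 one has (1∧|𝔣|)sign 𝔣 ∈ 𝒱 (coordinatewise), and Re 𝔞((1∧|𝔣|)sign 𝔣, (|𝔣|−1)⁺ sign 𝔣) ≥ 0; (B) for every i = 1,…,m: (i) f ∈ V_i implies (1∧|f|)sign f ∈ V_i, and (ii) for every 𝔣 ∈ 𝒱 ∩ 𝒞_i^∞ one has Σ_{j≠i} |a_{ij}(f_j, (|f_i|−1)⁺ sign f_i)| ≤ Re a_{ii}((1∧|f_i|)sign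 f_i, (|f_i|−1)⁺ sign f_i). -/
open Finset MeasureTheory

/-- A map `a : E → F → ℂ` is sesquilinear on the pair of submodules `(V, W)`:
linear in the first variable and antilinear in the second, for arguments in `V` and `W`. -/
def SesquiOnStmt19 {E F : Type*} [AddCommGroup E] [Module ℂ E] [AddCommGroup F] [Module ℂ F]
    (V : Submodule ℂ E) (W : Submodule ℂ F) (a : E → F → ℂ) : Prop :=
  (∀ f₁ ∈ V, ∀ f₂ ∈ V, ∀ g ∈ W, a (f₁ + f₂) g = a f₁ g + a f₂ g) ∧
  (∀ (c : ℂ), ∀ f ∈ V, ∀ g ∈ W, a (c • f) g = c * a f g) ∧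
  (∀ f ∈ V, ∀ g₁ ∈ W, ∀ g₂ ∈ W, a f (g₁ + g₂) = a f g₁ + a f g₂) ∧
  (∀ (c : ℂ), ∀ f ∈ V, ∀ g ∈ W, a f (c • g) = (starRingEnd ℂ) c * a f g)

/-- The generalized (complex-valued) sign: `sign z = z / |z|` if `z ≠ 0`, and `0` otherwise. -/
noncomputable def csignStmt19 (z : ℂ) : ℂ :=
  if z = 0 then 0 else z / (‖z‖ : ℂ)

/-- The pointwise truncation `(1 ∧ |f|) sign f`. -/
noncomputable def truncStmt19 {α : Type*} (f : α → ℂ) : α → ℂ :=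
  fun x => ((min 1 (‖f x‖) : ℝ) : ℂ) * csignStmt19 (f x)

/-- The pointwise excess part `(|f| - 1)⁺ sign f`. -/
noncomputable def excessStmt19 {α : Type*} (f : α → ℂ) : α → ℂ :=
  fun x => ((max (‖f x‖ - 1) 0 : ℝ) : ℂ) * csignStmt19 (f x)


/-!
(B) ⇒ (A): take `t = (1 ∧ |𝔣|) sign 𝔣 ∈ 𝒱` and `u = 𝔣 - t`. For each row `i`, condition (ii)
applied to the vector with `f i` in slot `i` and `t j` elsewhere dominates the off-diagonal terms
of that row, since `-|z| ≤ Re z`.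

(A) ⇒ (B): for (ii), multiply each off-diagonal `f j` by `rot j = -conj (sign a_ij(f j, u))`, so
that `rot j a_ij(f j, u) = -|a_ij(f j, u)|`. As `|rot j f j| ≤ 1`, these components are their own
truncations and have zero excess, so (A) for the rotated vector reads
`0 ≤ Re a_ii(t, u) - ∑_{j ≠ i} |a_ij(f j, u)|`.
-/

lemma norm_mul_csignStmt19 (z : ℂ) : (‖z‖ : ℂ) * csignStmt19 z = z := by
  unfold csignStmt19
  split_ifs with h
  · simp [h]
  · have : (‖z‖ : ℂ) ≠ 0 := by exact_mod_cast norm_ne_zero_iff.mpr h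
    field_simp

lemma norm_csignStmt19_le_one (z : ℂ) : ‖csignStmt19 z‖ ≤ 1 := by
  unfold csignStmt19
  split_ifs with h
  · simp
  · simp [norm_ne_zero_iff.mpr h]

lemma conj_csignStmt19_mul_self (z : ℂ) : starRingEnd ℂ (csignStmt19 z) * z = ‖z‖ := by
  unfold csignStmt19
  split_ifs with h
  · simp [h]
  · have : (‖z‖ : ℂ) ≠ 0 := by exact_mod_cast norm_ne_zero_iff.mpr h
    rw [map_div₀, Complex.conj_ofReal, div_mul_eq_mul_div, Complex.conj_mul']
    field_simp

section Truncation

variable {α : Type*} (f : α → ℂ) (x : α)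

lemma truncStmt19_add_excessStmt19 : truncStmt19 f x + excessStmt19 f x = f x := by
  unfold truncStmt19 excessStmt19
  rw [← add_mul, ← Complex.ofReal_add]
  have h : min 1 ‖f x‖ + max (‖f x‖ - 1) 0 = ‖f x‖ := by
    rcases le_total ‖f x‖ 1 with h | h
    · rw [min_eq_right h, max_eq_right (by linarith)]; ring
    · rw [min_eq_left h, max_eq_left (by linarith)]; ring
  rw [h, norm_mul_csignStmt19]

lemma norm_truncStmt19_le_one : ‖truncStmt19 f x‖ ≤ 1 := by
  unfold truncStmt19
  rw [norm_mul, Complex.norm_real, Real.norm_of_nonneg (by positivity)]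
  exact mul_le_one₀ (min_le_left _ _) (norm_nonneg _) (norm_csignStmt19_le_one _)

variable {f x}

lemma truncStmt19_of_norm_le_one (h : ‖f x‖ ≤ 1) : truncStmt19 f x = f x := by
  unfold truncStmt19
  rw [min_eq_right h, norm_mul_csignStmt19]

lemma excessStmt19_of_norm_le_one (h : ‖f x‖ ≤ 1) : excessStmt19 f x = 0 := by
  unfold excessStmt19
  rw [max_eq_right (by linarith)]
  simp

end Truncation

namespace MeasureTheory.Lp

variable {X : Type*} [MeasurableSpace X] {μ : Measure X} {p : ENNReal} {f t u : Lp ℂ p μ}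

lemma coeFn_sub_ae_eq_excessStmt19 (ht : ⇑t =ᵐ[μ] truncStmt19 f) :
    ⇑(f - t) =ᵐ[μ] excessStmt19 f := by
  filter_upwards [coeFn_sub f t, ht] with x hsub hx
  rw [hsub, Pi.sub_apply, hx, ← truncStmt19_add_excessStmt19 (⇑f) x, add_sub_cancel_left]

lemma eq_of_ae_eq_truncStmt19 (hf : ∀ᵐ x ∂μ, ‖f x‖ ≤ 1) (ht : ⇑t =ᵐ[μ] truncStmt19 f) :
    t = f := by
  ext1
  filter_upwards [hf, ht] with x hfx htx
  rw [htx, truncStmt19_of_norm_le_one hfx]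

lemma eq_zero_of_ae_eq_excessStmt19 (hf : ∀ᵐ x ∂μ, ‖f x‖ ≤ 1) (hu : ⇑u =ᵐ[μ] excessStmt19 f) :
    u = 0 := by
  ext1
  filter_upwards [hf, hu, coeFn_zero ℂ p μ] with x hfx hux h0
  rw [hux, excessStmt19_of_norm_le_one hfx, h0, Pi.zero_apply]

end MeasureTheory.Lp

lemma SesquiOnStmt19.apply_zero_right {E F : Type*} [AddCommGroup E] [Module ℂ E]
    [AddCommGroup F] [Module ℂ F] {V : Submodule ℂ E} {W : Submodule ℂ F} {a : E → F → ℂ}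
    (h : SesquiOnStmt19 V W a) {f : E} (hf : f ∈ V) : a f 0 = 0 := by
  simpa using h.2.2.2 0 f hf 0 W.zero_mem

lemma Complex.re_sum_nonneg_of_sum_erase_norm_le {ι : Type*} [DecidableEq ι] {s : Finset ι}
    {i : ι} (hi : i ∈ s) (z : ι → ℂ) (h : ∑ j ∈ s.erase i, ‖z j‖ ≤ (z i).re) :
    0 ≤ (∑ j ∈ s, z j).re := by
  rw [← add_sum_erase s z hi, Complex.add_re, Complex.re_sum]
  have : -∑ j ∈ s.erase i, ‖z j‖ ≤ ∑ j ∈ s.erase i, (z j).re := by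
    rw [← sum_neg_distrib]
    exact sum_le_sum fun j _ => neg_le_of_abs_le (Complex.abs_re_le_norm _)
  linarith

section Criterion

variable {m : ℕ} {X : Fin m → Type*} [∀ i, MeasurableSpace (X i)] {μ : ∀ i, Measure (X i)}

/-- Condition (A) of the criterion. -/
def TruncationCriterion (μ : ∀ i, Measure (X i)) (V : ∀ i, Submodule ℂ (Lp ℂ 2 (μ i)))
    (a : ∀ i j : Fin m, Lp ℂ 2 (μ j) → Lp ℂ 2 (μ i) → ℂ) : Prop :=
  ∀ f : ∀ i, Lp ℂ 2 (μ i), (∀ i, f i ∈ V i) →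
    ∃ t u : ∀ i, Lp ℂ 2 (μ i),
      (∀ i, t i ∈ V i) ∧ (∀ i, u i ∈ V i) ∧
      (∀ i, ⇑(t i) =ᵐ[μ i] truncStmt19 (f i : X i → ℂ)) ∧
      (∀ i, ⇑(u i) =ᵐ[μ i] excessStmt19 (f i : X i → ℂ)) ∧
      0 ≤ (∑ i, ∑ j, a i j (t j) (u i)).re

variable {V : ∀ i, Submodule ℂ (Lp ℂ 2 (μ i))} {a : ∀ i j : Fin m, Lp ℂ 2 (μ j) → Lp ℂ 2 (μ i) → ℂ}

namespace TruncationCriterion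

lemma exists_mem_ae_eq_truncStmt19 (hA : TruncationCriterion μ V a) {i : Fin m}
    {f : Lp ℂ 2 (μ i)} (hf : f ∈ V i) : ∃ t ∈ V i, ⇑t =ᵐ[μ i] truncStmt19 (f : X i → ℂ) := by
  have hmem : ∀ k, Function.update (0 : ∀ k, Lp ℂ 2 (μ k)) i f k ∈ V k :=
    (Function.forall_update_iff _ fun k g => g ∈ V k).2 ⟨hf, fun k _ => (V k).zero_mem⟩
  obtain ⟨t, -, ht, -, htae, -⟩ := hA _ hmem
  exact ⟨t i, ht i, by simpa using htae i⟩

lemma sum_erase_norm_le_re (hA : TruncationCriterion μ V a)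
    (hses : ∀ i j, SesquiOnStmt19 (V j) (V i) (a i j)) {i : Fin m} {f : ∀ k, Lp ℂ 2 (μ k)}
    (hf : ∀ k, f k ∈ V k) (hbd : ∀ j, j ≠ i → ∀ᵐ x ∂(μ j), ‖(f j : X j → ℂ) x‖ ≤ 1)
    {t u : Lp ℂ 2 (μ i)} (hu : u ∈ V i)
    (htae : ⇑t =ᵐ[μ i] truncStmt19 (f i : X i → ℂ))
    (huae : ⇑u =ᵐ[μ i] excessStmt19 (f i : X i → ℂ)) :
    ∑ j ∈ univ.erase i, ‖a i j (f j) u‖ ≤ (a i i t u).re := by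
  set rot : Fin m → ℂ := fun j => -starRingEnd ℂ (csignStmt19 (a i j (f j) u))
  set g : ∀ k, Lp ℂ 2 (μ k) := Function.update (fun k => rot k • f k) i (f i)
  have hg : ∀ k, g k ∈ V k :=
    (Function.forall_update_iff _ fun k g => g ∈ V k).2
      ⟨hf i, fun k _ => (V k).smul_mem _ (hf k)⟩
  have hgi : g i = f i := Function.update_self ..
  have hgj : ∀ j, j ≠ i → g j = rot j • f j := fun j hj => Function.update_of_ne hj ..
  have hgbd : ∀ j, j ≠ i → ∀ᵐ x ∂(μ j), ‖(g j : X j → ℂ) x‖ ≤ 1 := fun j hj => by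
    filter_upwards [Lp.coeFn_smul (rot j) (f j), hbd j hj] with x hx hfx
    rw [hgj j hj, hx, Pi.smul_apply, smul_eq_mul, norm_mul]
    exact mul_le_one₀ (by simpa [rot] using norm_csignStmt19_le_one _) (norm_nonneg _) hfx
  obtain ⟨t', u', ht', -, ht'ae, hu'ae, hpos⟩ := hA g hg
  have ht'i : t' i = t := Lp.ext <| (hgi ▸ ht'ae i).trans htae.symm
  have hu'i : u' i = u := Lp.ext <| (hgi ▸ hu'ae i).trans huae.symm
  have hrow : ∑ i', ∑ j, a i' j (t' j) (u' i') = ∑ j, a i j (t' j) u := by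
    rw [sum_eq_single i (fun i' _ hi' => ?_) (by simp), hu'i]
    rw [Lp.eq_zero_of_ae_eq_excessStmt19 (hgbd i' hi') (hu'ae i')]
    exact sum_eq_zero fun j _ => (hses i' j).apply_zero_right (ht' j)
  have hoff : ∀ j ∈ univ.erase i, a i j (t' j) u = -‖a i j (f j) u‖ := fun j hj => by
    have hj := ne_of_mem_erase hj
    rw [Lp.eq_of_ae_eq_truncStmt19 (hgbd j hj) (ht'ae j), hgj j hj,
      (hses i j).2.1 _ _ (hf j) u hu, neg_mul, conj_csignStmt19_mul_self]
  rw [hrow, ← add_sum_erase _ _ (mem_univ i), sum_congr rfl hoff, ht'i, Complex.add_re,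
    Complex.re_sum] at hpos
  simp only [Complex.neg_re, Complex.ofReal_re, sum_neg_distrib] at hpos
  linarith

end TruncationCriterion

lemma truncationCriterion_of_forall_sum_erase_norm_le_re
    (htrunc : ∀ i, ∀ f ∈ V i, ∃ t ∈ V i, ⇑t =ᵐ[μ i] truncStmt19 (f : X i → ℂ))
    (hoff : ∀ i, ∀ f : ∀ k, Lp ℂ 2 (μ k), (∀ k, f k ∈ V k) →
      (∀ j, j ≠ i → ∀ᵐ x ∂(μ j), ‖(f j : X j → ℂ) x‖ ≤ 1) →
      ∀ t u : Lp ℂ 2 (μ i), t ∈ V i → u ∈ V i →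
        (⇑t =ᵐ[μ i] truncStmt19 (f i : X i → ℂ)) →
        (⇑u =ᵐ[μ i] excessStmt19 (f i : X i → ℂ)) →
        (∑ j ∈ univ.erase i, ‖a i j (f j) u‖) ≤ (a i i t u).re) :
    TruncationCriterion μ V a := by
  intro f hf
  choose t ht htae using fun k => htrunc k (f k) (hf k)
  have hu : ∀ k, f k - t k ∈ V k := fun k => (V k).sub_mem (hf k) (ht k)
  have huae : ∀ k, ⇑(f k - t k) =ᵐ[μ k] excessStmt19 (f k : X k → ℂ) := fun k =>
    Lp.coeFn_sub_ae_eq_excessStmt19 (htae k)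
  refine ⟨t, fun k => f k - t k, ht, hu, htae, huae, ?_⟩
  rw [Complex.re_sum]
  refine sum_nonneg fun i _ => Complex.re_sum_nonneg_of_sum_erase_norm_le (mem_univ i) _ ?_
  have hmem : ∀ k, Function.update t i (f i) k ∈ V k :=
    (Function.forall_update_iff _ fun k g => g ∈ V k).2 ⟨hf i, fun k _ => ht k⟩
  have hbd : ∀ j, j ≠ i → ∀ᵐ x ∂(μ j), ‖(Function.update t i (f i) j : X j → ℂ) x‖ ≤ 1 :=
    fun j hj => by
      filter_upwards [htae j] with x hx
      rw [Function.update_of_ne hj, hx]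
      exact norm_truncStmt19_le_one _ x
  have hrow := hoff i _ hmem hbd (t i) (f i - t i) (ht i) (hu i)
    (by rw [Function.update_self]; exact htae i) (by rw [Function.update_self]; exact huae i)
  refine le_of_eq_of_le (sum_congr rfl fun j hj => ?_) hrow
  rw [Function.update_of_ne (ne_of_mem_erase hj)]

end Criterion

theorem stmt19_general {m : ℕ}
    {X : Fin m → Type*} [∀ i, MeasurableSpace (X i)]
    (μ : ∀ i, Measure (X i))
    (V : ∀ i, Submodule ℂ (Lp ℂ 2 (μ i)))
    (a : ∀ i j : Fin m, Lp ℂ 2 (μ j) → Lp ℂ 2 (μ i) → ℂ)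
    (hses : ∀ i j, SesquiOnStmt19 (V j) (V i) (a i j)) :
    (∀ f : ∀ i, Lp ℂ 2 (μ i), (∀ i, f i ∈ V i) →
        ∃ t u : ∀ i, Lp ℂ 2 (μ i),
          (∀ i, t i ∈ V i) ∧ (∀ i, u i ∈ V i) ∧
          (∀ i, ⇑(t i) =ᵐ[μ i] truncStmt19 (f i : X i → ℂ)) ∧
          (∀ i, ⇑(u i) =ᵐ[μ i] excessStmt19 (f i : X i → ℂ)) ∧
          0 ≤ (∑ i, ∑ j, a i j (t j) (u i)).re) ↔
      (∀ i : Fin m,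
        (∀ f ∈ V i, ∃ t ∈ V i, ⇑t =ᵐ[μ i] truncStmt19 (f : X i → ℂ)) ∧
        (∀ f : ∀ k, Lp ℂ 2 (μ k), (∀ k, f k ∈ V k) →
          (∀ j, j ≠ i → ∀ᵐ x ∂(μ j), ‖(f j : X j → ℂ) x‖ ≤ 1) →
          ∀ t u : Lp ℂ 2 (μ i), t ∈ V i → u ∈ V i →
            (⇑t =ᵐ[μ i] truncStmt19 (f i : X i → ℂ)) →
            (⇑u =ᵐ[μ i] excessStmt19 (f i : X i → ℂ)) →
            (∑ j ∈ Finset.univ.erase i, ‖a i j (f j) u‖) ≤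
              (a i i t u).re)) := by
  refine ⟨fun hA i => ?_, fun hB => ?_⟩
  · change TruncationCriterion μ V a at hA
    exact ⟨fun f hf => hA.exists_mem_ae_eq_truncStmt19 hf,
      fun f hf hbd t u _ hu htae huae => hA.sum_erase_norm_le_re hses hf hbd hu htae huae⟩
  · exact truncationCriterion_of_forall_sum_erase_norm_le_re (fun i => (hB i).1)
      (fun i => (hB i).2)

/-- criterion for `L^∞`-contractivity. Assume the form matrix `𝔞` is
accretive. The following are equivalent: (A) for every `𝔣 ∈ 𝒱`, the coordinatewise truncation
`(1 ∧ |𝔣|) sign 𝔣` and excess `(|𝔣| - 1)⁺ sign 𝔣` (as `L²` elements described by their a.e.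
pointwise values) belong to `𝒱`, and `Re 𝔞((1 ∧ |𝔣|) sign 𝔣, (|𝔣| - 1)⁺ sign 𝔣) ≥ 0`;
(B) for every `i`: (i) `f ∈ V i` implies `(1 ∧ |f|) sign f ∈ V i`, and (ii) for every
`𝔣 ∈ 𝒱 ∩ 𝒞_i^∞` one has
`∑_{j ≠ i} |a i j (f j, (|f i| - 1)⁺ sign f i)| ≤ Re a i i ((1 ∧ |f i|) sign f i, (|f i| - 1)⁺ sign f i)`. -/
theorem stmt19 {m : ℕ} (hm : 1 ≤ m)
    {X : Fin m → Type*} [∀ i, MeasurableSpace (X i)]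
    (μ : ∀ i, Measure (X i)) [∀ i, SigmaFinite (μ i)]
    (V : ∀ i, Submodule ℂ (Lp ℂ 2 (μ i)))
    (a : ∀ i j : Fin m, Lp ℂ 2 (μ j) → Lp ℂ 2 (μ i) → ℂ)
    (hses : ∀ i j, SesquiOnStmt19 (V j) (V i) (a i j))
    (hacc : ∀ f : ∀ i, Lp ℂ 2 (μ i), (∀ i, f i ∈ V i) →
      0 ≤ (∑ i, ∑ j, a i j (f j) (f i)).re) :
    (∀ f : ∀ i, Lp ℂ 2 (μ i), (∀ i, f i ∈ V i) →
        ∃ t u : ∀ i, Lp ℂ 2 (μ i),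
          (∀ i, t i ∈ V i) ∧ (∀ i, u i ∈ V i) ∧
          (∀ i, ⇑(t i) =ᵐ[μ i] truncStmt19 (f i : X i → ℂ)) ∧
          (∀ i, ⇑(u i) =ᵐ[μ i] excessStmt19 (f i : X i → ℂ)) ∧
          0 ≤ (∑ i, ∑ j, a i j (t j) (u i)).re) ↔
      (∀ i : Fin m,
        (∀ f ∈ V i, ∃ t ∈ V i, ⇑t =ᵐ[μ i] truncStmt19 (f : X i → ℂ)) ∧
        (∀ f : ∀ k, Lp ℂ 2 (μ k), (∀ k, f k ∈ V k) →
          (∀ j, j ≠ i → ∀ᵐ x ∂(μ j), ‖(f j : X j → ℂ) x‖ ≤ 1) →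
          ∀ t u : Lp ℂ 2 (μ i), t ∈ V i → u ∈ V i →
            (⇑t =ᵐ[μ i] truncStmt19 (f i : X i → ℂ)) →
            (⇑u =ᵐ[μ i] excessStmt19 (f i : X i → ℂ)) →
            (∑ j ∈ Finset.univ.erase i, ‖a i j (f j) u‖) ≤
              (a i i t u).re)) :=
  stmt19_general μ V a hses
end
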